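/- arXiv:1805.03284 — 9 statements merged into one kernel-verified Lean document; each statement's English description precedes it below -/
import Mathlib

section
/- For any monotone hemi-norm ν on the nonnegative orthant ℝ₊ⁿ, there exists a vector c with strictly positive entries such that ν(x) ≤ ⟨c, x⟩ ≤ n·ν(x) for all nonnegative vectors x. -/
/-! The coordinate weights `c i := ν (Pi.single i 1)` work. Writing `x = ∑ i, Pi.single i (x i)`,
subadditivity of `ν` (convexity plus homogeneity) gives `ν x ≤ ∑ i, c i * x i`, while monotonicity
gives `c i * x i = ν (Pi.single i (x i)) ≤ ν x` for each of the `n` summands. Definiteness makes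
each `c i` positive. -/

namespace Heminorm

theorem map_zero_of_homogeneous {E : Type*} [Zero E] [Preorder E] [SMulZeroClass ℝ E]
    {ν : E → ℝ} (hhom : ∀ t : ℝ, 0 < t → ∀ x : E, 0 ≤ x → ν (t • x) = t * ν x) :
    ν 0 = 0 := by
  have h := hhom 2 two_pos 0 le_rfl
  rw [smul_zero] at h
  linarith

section OrderedModule

variable {E : Type*} [AddCommGroup E] [PartialOrder E] [IsOrderedAddMonoid E] [Module ℝ E]
  [PosSMulMono ℝ E] {ν : E → ℝ}

theorem map_add_le_of_convex_of_homogeneous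
    (hconv : ∀ x y : E, 0 ≤ x → 0 ≤ y → ∀ t : ℝ, 0 ≤ t → t ≤ 1 →
      ν (t • x + (1 - t) • y) ≤ t * ν x + (1 - t) * ν y)
    (hhom : ∀ t : ℝ, 0 < t → ∀ x : E, 0 ≤ x → ν (t • x) = t * ν x)
    {x y : E} (hx : 0 ≤ x) (hy : 0 ≤ y) : ν (x + y) ≤ ν x + ν y := by
  have hmid : 0 ≤ (1 / 2 : ℝ) • x + (1 - 1 / 2 : ℝ) • y :=
    add_nonneg (smul_nonneg (by norm_num) hx) (smul_nonneg (by norm_num) hy)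
  calc ν (x + y) = 2 * ν ((1 / 2 : ℝ) • x + (1 - 1 / 2 : ℝ) • y) := by
        rw [← hhom 2 two_pos _ hmid]
        congr 1
        module
    _ ≤ 2 * (1 / 2 * ν x + (1 - 1 / 2) * ν y) := by
        gcongr
        exact hconv x y hx hy _ (by norm_num) (by norm_num)
    _ = ν x + ν y := by ring

end OrderedModule

section Coordinates

variable {ι : Type*} [DecidableEq ι] {ν : (ι → ℝ) → ℝ}

theorem map_single_eq_mul (hhom : ∀ t : ℝ, 0 < t → ∀ x : ι → ℝ, 0 ≤ x → ν (t • x) = t * ν x)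
    (i : ι) {a : ℝ} (ha : 0 ≤ a) : ν (Pi.single i a) = a * ν (Pi.single i 1) := by
  rcases ha.eq_or_lt with rfl | ha
  · simp [map_zero_of_homogeneous hhom]
  · rw [← hhom a ha _ (Pi.single_nonneg.2 zero_le_one), ← Pi.single_smul, smul_eq_mul, mul_one]

theorem map_single_one_pos (hν0 : ν 0 = 0) (hmono : ∀ x y : ι → ℝ, 0 ≤ x → x ≤ y → ν x ≤ ν y)
    (hdef : ∀ x : ι → ℝ, 0 ≤ x → ν x = 0 → x = 0) (i : ι) : 0 < ν (Pi.single i 1) := by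
  have hsingle : (0 : ι → ℝ) ≤ Pi.single i 1 := Pi.single_nonneg.2 zero_le_one
  have hnonneg : 0 ≤ ν (Pi.single i 1) := hν0 ▸ hmono 0 _ le_rfl hsingle
  refine hnonneg.lt_of_ne fun h => ?_
  simpa using congrFun (hdef _ hsingle h.symm) i

theorem single_le_of_nonneg {x : ι → ℝ} (hx : 0 ≤ x) (i : ι) : Pi.single i (x i) ≤ x := by
  intro j
  rcases eq_or_ne j i with rfl | hj
  · simp
  · simpa [hj] using hx j

variable [Fintype ι]

theorem le_sum_map_single_mul
    (hconv : ∀ x y : ι → ℝ, 0 ≤ x → 0 ≤ y → ∀ t : ℝ, 0 ≤ t → t ≤ 1 →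
      ν (t • x + (1 - t) • y) ≤ t * ν x + (1 - t) * ν y)
    (hhom : ∀ t : ℝ, 0 < t → ∀ x : ι → ℝ, 0 ≤ x → ν (t • x) = t * ν x)
    {x : ι → ℝ} (hx : 0 ≤ x) : ν x ≤ ∑ i, ν (Pi.single i 1) * x i := by
  calc ν x = ν (∑ i, Pi.single i (x i)) := by rw [Finset.univ_sum_single]
    _ ≤ ∑ i, ν (Pi.single i (x i)) :=
        Finset.le_sum_of_subadditive_on_pred ν (0 ≤ ·) (map_zero_of_homogeneous hhom).le
          (fun _ _ => map_add_le_of_convex_of_homogeneous hconv hhom) (fun _ _ => add_nonneg) _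
          fun i _ => Pi.single_nonneg.2 (hx i)
    _ = ∑ i, ν (Pi.single i 1) * x i :=
        Finset.sum_congr rfl fun i _ => by rw [map_single_eq_mul hhom i (hx i), mul_comm]

theorem sum_map_single_mul_le (hhom : ∀ t : ℝ, 0 < t → ∀ x : ι → ℝ, 0 ≤ x → ν (t • x) = t * ν x)
    (hmono : ∀ x y : ι → ℝ, 0 ≤ x → x ≤ y → ν x ≤ ν y) {x : ι → ℝ} (hx : 0 ≤ x) :
    ∑ i, ν (Pi.single i 1) * x i ≤ Fintype.card ι * ν x := by
  calc ∑ i, ν (Pi.single i 1) * x i = ∑ i, ν (Pi.single i (x i)) :=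
        Finset.sum_congr rfl fun i _ => by rw [map_single_eq_mul hhom i (hx i), mul_comm]
    _ ≤ ∑ _i : ι, ν x := Finset.sum_le_sum fun i _ =>
        hmono _ _ (Pi.single_nonneg.2 (hx i)) (single_le_of_nonneg hx i)
    _ = Fintype.card ι * ν x := by simp

end Coordinates

end Heminorm

/-- For any monotone hemi-norm ν on ℝ₊ⁿ, there is a vector `c` with
positive entries such that `ν x ≤ ⟨c, x⟩ ≤ n * ν x` for all nonnegative `x`. -/
theorem monotone_heminorm_linear_approx {n : ℕ} (ν : (Fin n → ℝ) → ℝ)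
    (hconv : ∀ x y : Fin n → ℝ, 0 ≤ x → 0 ≤ y → ∀ t : ℝ, 0 ≤ t → t ≤ 1 →
      ν (t • x + (1 - t) • y) ≤ t * ν x + (1 - t) * ν y)
    (hhom : ∀ t : ℝ, 0 < t → ∀ x : Fin n → ℝ, 0 ≤ x → ν (t • x) = t * ν x)
    (hmono : ∀ x y : Fin n → ℝ, 0 ≤ x → x ≤ y → ν x ≤ ν y)
    (hdef : ∀ x : Fin n → ℝ, 0 ≤ x → ν x = 0 → x = 0) :
    ∃ c : Fin n → ℝ, (∀ i, 0 < c i) ∧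
      ∀ x : Fin n → ℝ, 0 ≤ x →
        ν x ≤ ∑ i, c i * x i ∧ ∑ i, c i * x i ≤ (n : ℝ) * ν x := by
  refine ⟨fun i => ν (Pi.single i 1),
    Heminorm.map_single_one_pos (Heminorm.map_zero_of_homogeneous hhom) hmono hdef,
    fun x hx => ⟨Heminorm.le_sum_map_single_mul hconv hhom hx, ?_⟩⟩
  simpa using Heminorm.sum_map_single_mul_le hhom hmono hx
end

section
/- If ν is a monotone hemi-norm on the nonnegative orthant ℝ₊ⁿ, then the map ν̂(x) := inf{ max(ν(y), ν(z)) : x = y − z, y ≥ 0, z ≥ 0 } defines a norm on ℝⁿ that extends ν, i.e., ν̂(x) = ν(x) for all x ≥ 0. -/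
/-!
Every decomposition `x = y - z` with `y, z ≥ 0` gives an upper bound `max (ν y) (ν z)` for `ν̂ x`.
Decompositions can be added, scaled by positive reals and swapped, so subadditivity of `ν` on the
cone (convexity plus homogeneity) yields the triangle inequality, homogeneity of `ν` passes to `ν̂`,
and `ν̂ (-x) = ν̂ x`. Monotonicity makes `x = x - 0` optimal when `x ≥ 0`. Finally `|x| ≤ y + z` for
every decomposition, so `ν |x| ≤ 2 ν̂ x`, and definiteness of `ν` gives definiteness of `ν̂`.
-/

open scoped Pointwise

namespace Heminorm

section PartialOrder

variable {E : Type*} [AddCommGroup E] [PartialOrder E] (ν : E → ℝ)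

def hatValues (x : E) : Set ℝ :=
  {m | ∃ y z : E, 0 ≤ y ∧ 0 ≤ z ∧ x = y - z ∧ m = max (ν y) (ν z)}

noncomputable def hat (x : E) : ℝ := sInf (hatValues ν x)

theorem hatValues_bddBelow (hnonneg : ∀ x : E, 0 ≤ x → 0 ≤ ν x) (x : E) :
    BddBelow (hatValues ν x) :=
  ⟨0, by rintro _ ⟨y, z, hy, -, -, rfl⟩; exact (hnonneg y hy).trans (le_max_left _ _)⟩

theorem hat_le (hnonneg : ∀ x : E, 0 ≤ x → 0 ≤ ν x) {x y z : E} (hy : 0 ≤ y) (hz : 0 ≤ z)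
    (hx : x = y - z) : hat ν x ≤ max (ν y) (ν z) :=
  csInf_le (hatValues_bddBelow ν hnonneg x) ⟨y, z, hy, hz, hx, rfl⟩

theorem hatValues_neg (x : E) : hatValues ν (-x) = hatValues ν x := by
  have swap : ∀ x : E, hatValues ν x ⊆ hatValues ν (-x) := by
    rintro x _ ⟨y, z, hy, hz, rfl, rfl⟩
    exact ⟨z, y, hz, hy, neg_sub y z, max_comm _ _⟩
  refine Set.Subset.antisymm ?_ (swap x)
  simpa using swap (-x)

theorem hat_neg (x : E) : hat ν (-x) = hat ν x := by
  rw [hat, hat, hatValues_neg]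

section Module

variable [Module ℝ E]

theorem map_zero (hhom : ∀ t : ℝ, 0 < t → ∀ x : E, 0 ≤ x → ν (t • x) = t * ν x) : ν 0 = 0 := by
  have h := hhom 2 two_pos 0 le_rfl
  rw [smul_zero] at h
  linarith

theorem nonneg (hhom : ∀ t : ℝ, 0 < t → ∀ x : E, 0 ≤ x → ν (t • x) = t * ν x)
    (hmono : ∀ x y : E, 0 ≤ x → x ≤ y → ν x ≤ ν y) {x : E} (hx : 0 ≤ x) : 0 ≤ ν x :=
  map_zero ν hhom ▸ hmono 0 x le_rfl hx

variable [PosSMulMono ℝ E]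

theorem map_add_le [IsOrderedAddMonoid E]
    (hconv : ∀ x y : E, 0 ≤ x → 0 ≤ y → ∀ t : ℝ, 0 ≤ t → t ≤ 1 →
      ν (t • x + (1 - t) • y) ≤ t * ν x + (1 - t) * ν y)
    (hhom : ∀ t : ℝ, 0 < t → ∀ x : E, 0 ≤ x → ν (t • x) = t * ν x)
    {x y : E} (hx : 0 ≤ x) (hy : 0 ≤ y) : ν (x + y) ≤ ν x + ν y := by
  have hmid : (0 : E) ≤ (1 / 2 : ℝ) • x + (1 - 1 / 2 : ℝ) • y :=
    add_nonneg (smul_nonneg (by norm_num) hx) (smul_nonneg (by norm_num) hy)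
  have hsum : (2 : ℝ) • ((1 / 2 : ℝ) • x + (1 - 1 / 2 : ℝ) • y) = x + y := by
    rw [smul_add, smul_smul, smul_smul]
    norm_num
  have h := hhom 2 two_pos _ hmid
  rw [hsum] at h
  linarith [hconv x y hx hy (1 / 2) (by norm_num) (by norm_num)]

theorem smul_hatValues_subset (hhom : ∀ t : ℝ, 0 < t → ∀ x : E, 0 ≤ x → ν (t • x) = t * ν x)
    {t : ℝ} (ht : 0 < t) (x : E) : t • hatValues ν x ⊆ hatValues ν (t • x) := by
  rintro _ ⟨_, ⟨y, z, hy, hz, rfl, rfl⟩, rfl⟩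
  refine ⟨t • y, t • z, smul_nonneg ht.le hy, smul_nonneg ht.le hz, smul_sub t y z, ?_⟩
  rw [hhom t ht y hy, hhom t ht z hz]
  exact mul_max_of_nonneg _ _ ht.le

theorem hatValues_smul (hhom : ∀ t : ℝ, 0 < t → ∀ x : E, 0 ≤ x → ν (t • x) = t * ν x)
    {t : ℝ} (ht : 0 < t) (x : E) : hatValues ν (t • x) = t • hatValues ν x := by
  refine Set.Subset.antisymm ((Set.subset_smul_set_iff₀ ht.ne').2 ?_)
    (smul_hatValues_subset ν hhom ht x)
  simpa [smul_smul, ht.ne'] using smul_hatValues_subset ν hhom (inv_pos.2 ht) (t • x)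

theorem hat_smul_of_pos (hhom : ∀ t : ℝ, 0 < t → ∀ x : E, 0 ≤ x → ν (t • x) = t * ν x)
    {t : ℝ} (ht : 0 < t) (x : E) : hat ν (t • x) = t * hat ν x := by
  rw [hat, hatValues_smul ν hhom ht, Real.sInf_smul_of_nonneg ht.le, smul_eq_mul, hat]

theorem hat_zero (hhom : ∀ t : ℝ, 0 < t → ∀ x : E, 0 ≤ x → ν (t • x) = t * ν x) :
    hat ν (0 : E) = 0 := by
  have h := hat_smul_of_pos ν hhom two_pos (0 : E)
  rw [smul_zero] at h
  linarith

theorem hat_smul (hhom : ∀ t : ℝ, 0 < t → ∀ x : E, 0 ≤ x → ν (t • x) = t * ν x)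
    (t : ℝ) (x : E) : hat ν (t • x) = |t| * hat ν x := by
  rcases lt_trichotomy t 0 with ht | rfl | ht
  · rw [← neg_smul_neg, hat_smul_of_pos ν hhom (neg_pos.2 ht), hat_neg, abs_of_neg ht]
  · rw [zero_smul, hat_zero ν hhom, abs_zero, zero_mul]
  · rw [hat_smul_of_pos ν hhom ht, abs_of_pos ht]

end Module

end PartialOrder

section Lattice

variable {E : Type*} [AddCommGroup E] [Lattice E] [IsOrderedAddMonoid E] (ν : E → ℝ)

theorem hatValues_nonempty (x : E) : (hatValues ν x).Nonempty :=
  ⟨_, x⁺, x⁻, posPart_nonneg x, negPart_nonneg x, (posPart_sub_negPart x).symm, rfl⟩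

theorem le_hat {x : E} {c : ℝ}
    (h : ∀ y z : E, 0 ≤ y → 0 ≤ z → x = y - z → c ≤ max (ν y) (ν z)) : c ≤ hat ν x :=
  le_csInf (hatValues_nonempty ν x) fun _ ⟨y, z, hy, hz, hx, hm⟩ => hm ▸ h y z hy hz hx

theorem hat_nonneg (hnonneg : ∀ x : E, 0 ≤ x → 0 ≤ ν x) (x : E) : 0 ≤ hat ν x :=
  le_hat ν fun y _ hy _ _ => (hnonneg y hy).trans (le_max_left _ _)

theorem hat_of_nonneg (hnonneg : ∀ x : E, 0 ≤ x → 0 ≤ ν x)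
    (hmono : ∀ x y : E, 0 ≤ x → x ≤ y → ν x ≤ ν y) {x : E} (hx : 0 ≤ x) : hat ν x = ν x := by
  refine le_antisymm ?_ (le_hat ν fun y z _ hz hxyz => ?_)
  · calc hat ν x ≤ max (ν x) (ν 0) := hat_le ν hnonneg hx le_rfl (sub_zero x).symm
      _ = ν x := max_eq_left (hmono 0 x le_rfl hx)
  · exact (hmono x y hx (hxyz ▸ sub_le_self y hz)).trans (le_max_left _ _)

theorem hat_add_le (hnonneg : ∀ x : E, 0 ≤ x → 0 ≤ ν x)
    (hsubadd : ∀ x y : E, 0 ≤ x → 0 ≤ y → ν (x + y) ≤ ν x + ν y) (x y : E) :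
    hat ν (x + y) ≤ hat ν x + hat ν y := by
  rw [hat, hat, hat, ← csInf_add (hatValues_nonempty ν x) (hatValues_bddBelow ν hnonneg x)
    (hatValues_nonempty ν y) (hatValues_bddBelow ν hnonneg y)]
  refine le_csInf ((hatValues_nonempty ν x).add (hatValues_nonempty ν y)) ?_
  rintro _ ⟨_, ⟨y₁, z₁, hy₁, hz₁, rfl, rfl⟩, _, ⟨y₂, z₂, hy₂, hz₂, rfl, rfl⟩, rfl⟩
  calc hat ν (y₁ - z₁ + (y₂ - z₂)) ≤ max (ν (y₁ + y₂)) (ν (z₁ + z₂)) :=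
        hat_le ν hnonneg (add_nonneg hy₁ hy₂) (add_nonneg hz₁ hz₂) (by abel)
    _ ≤ max (ν y₁) (ν z₁) + max (ν y₂) (ν z₂) :=
        max_le ((hsubadd _ _ hy₁ hy₂).trans (add_le_add (le_max_left _ _) (le_max_left _ _)))
          ((hsubadd _ _ hz₁ hz₂).trans (add_le_add (le_max_right _ _) (le_max_right _ _)))

theorem abs_le_add_of_eq_sub {x y z : E} (hy : 0 ≤ y) (hz : 0 ≤ z) (hx : x = y - z) :
    |x| ≤ y + z := by
  have := abs_add_le y (-z)
  rwa [abs_neg, abs_of_nonneg hy, abs_of_nonneg hz, ← sub_eq_add_neg, ← hx] at this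

theorem half_map_abs_le_hat (hsubadd : ∀ x y : E, 0 ≤ x → 0 ≤ y → ν (x + y) ≤ ν x + ν y)
    (hmono : ∀ x y : E, 0 ≤ x → x ≤ y → ν x ≤ ν y) (x : E) : ν |x| / 2 ≤ hat ν x := by
  refine le_hat ν fun y z hy hz hx => ?_
  have := (hmono _ _ (abs_nonneg x) (abs_le_add_of_eq_sub hy hz hx)).trans (hsubadd y z hy hz)
  linarith [le_max_left (ν y) (ν z), le_max_right (ν y) (ν z)]

theorem eq_zero_of_hat_eq_zero (hnonneg : ∀ x : E, 0 ≤ x → 0 ≤ ν x)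
    (hsubadd : ∀ x y : E, 0 ≤ x → 0 ≤ y → ν (x + y) ≤ ν x + ν y)
    (hmono : ∀ x y : E, 0 ≤ x → x ≤ y → ν x ≤ ν y) (hdef : ∀ x : E, 0 ≤ x → ν x = 0 → x = 0)
    {x : E} (hx : hat ν x = 0) : x = 0 := by
  have hbound := half_map_abs_le_hat ν hsubadd hmono x
  have habs : |x| = 0 := hdef _ (abs_nonneg x) (by linarith [hnonneg _ (abs_nonneg x)])
  exact le_antisymm (habs ▸ le_abs_self x) (neg_nonpos.1 (habs ▸ neg_le_abs x))

end Lattice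

end Heminorm

open Heminorm

/-- the extension `ν̂ x = inf { max (ν y) (ν z) : x = y - z, y, z ≥ 0 }`
of a monotone hemi-norm ν on ℝ₊ⁿ is a norm on ℝⁿ that agrees with ν on ℝ₊ⁿ. -/
theorem monotone_heminorm_extension_is_norm {n : ℕ} (ν : (Fin n → ℝ) → ℝ)
    (hconv : ∀ x y : Fin n → ℝ, 0 ≤ x → 0 ≤ y → ∀ t : ℝ, 0 ≤ t → t ≤ 1 →
      ν (t • x + (1 - t) • y) ≤ t * ν x + (1 - t) * ν y)
    (hhom : ∀ t : ℝ, 0 < t → ∀ x : Fin n → ℝ, 0 ≤ x → ν (t • x) = t * ν x)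
    (hmono : ∀ x y : Fin n → ℝ, 0 ≤ x → x ≤ y → ν x ≤ ν y)
    (hdef : ∀ x : Fin n → ℝ, 0 ≤ x → ν x = 0 → x = 0)
    (νhat : (Fin n → ℝ) → ℝ)
    (hνhat : ∀ x : Fin n → ℝ, νhat x =
      sInf {m : ℝ | ∃ y z : Fin n → ℝ, 0 ≤ y ∧ 0 ≤ z ∧ x = y - z ∧ m = max (ν y) (ν z)}) :
    (∀ x, 0 ≤ νhat x) ∧
    (∀ x, νhat x = 0 ↔ x = 0) ∧
    (∀ (t : ℝ) (x : Fin n → ℝ), νhat (t • x) = |t| * νhat x) ∧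
    (∀ x y : Fin n → ℝ, νhat (x + y) ≤ νhat x + νhat y) ∧
    (∀ x : Fin n → ℝ, 0 ≤ x → νhat x = ν x) := by
  obtain rfl : νhat = hat ν := funext hνhat
  have hnonneg : ∀ x, 0 ≤ x → 0 ≤ ν x := fun _ => nonneg ν hhom hmono
  have hsubadd : ∀ x y, 0 ≤ x → 0 ≤ y → ν (x + y) ≤ ν x + ν y :=
    fun _ _ => map_add_le ν hconv hhom
  exact ⟨hat_nonneg ν hnonneg, fun _ => ⟨eq_zero_of_hat_eq_zero ν hnonneg hsubadd hmono hdef,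
      fun hx => hx ▸ hat_zero ν hhom⟩,
    hat_smul ν hhom, hat_add_le ν hnonneg hsubadd, fun _ => hat_of_nonneg ν hnonneg hmono⟩
end

section
/- Let f : ℝ₊ⁿ → ℝ₊ⁿ be continuous, monotone (x ≤ y implies f(x) ≤ f(y)) and positively homogeneous of degree one. Then the maximum max{ρ ≥ 0 : ∃ v ∈ ℝ₊ⁿ, v ≠ 0, f(v) ≥ ρ v} is attained, and any λ ≥ 0 such that f(v) ≥ λ v for some nonzero v ∈ ℝ₊ⁿ satisfies λ ≤ inf{ρ > 0 : ∃ u with all entries positive, f(u) ≤ ρ u}. -/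
/-!
If `lam • v ≤ f v` with `v ≥ 0, v ≠ 0` and `f u ≤ ρ • u` with `u > 0`, scale `u` by the largest
ratio `t = maxᵢ vᵢ / uᵢ`, so that `v ≤ t • u` with equality in some coordinate `j`. Monotonicity
and homogeneity give `lam • v ≤ f v ≤ f (t • u) = t • f u ≤ (t * ρ) • u`, and reading this at `j`
yields `lam ≤ ρ`. Taking `u = 1` bounds the lower Collatz–Wielandt set; normalising `v` onto the
unit sphere exhibits that set as the projection of a compact set, so its supremum is attained.
-/

open Set Metric

section CollatzWielandt

variable {ι : Type*} {f : (ι → ℝ) → ι → ℝ}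

theorem map_zero_of_homogeneous
    (hhom : ∀ t : ℝ, 0 < t → ∀ x : ι → ℝ, 0 ≤ x → f (t • x) = t • f x) : f 0 = 0 := by
  have h := hhom 2 two_pos 0 le_rfl
  rw [smul_zero, two_smul] at h
  simpa using h

theorem map_nonneg_of_monotone_of_homogeneous
    (hmono : ∀ x y : ι → ℝ, 0 ≤ x → x ≤ y → f x ≤ f y)
    (hhom : ∀ t : ℝ, 0 < t → ∀ x : ι → ℝ, 0 ≤ x → f (t • x) = t • f x)
    {x : ι → ℝ} (hx : 0 ≤ x) : 0 ≤ f x :=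
  map_zero_of_homogeneous hhom ▸ hmono 0 x le_rfl hx

theorem exists_le_smul_eq_mul [Fintype ι] {u v : ι → ℝ} (hu : ∀ i, 0 < u i) (hv : 0 < v) :
    ∃ t > 0, ∃ j, v ≤ t • u ∧ v j = t * u j := by
  obtain ⟨-, k, hk⟩ := Pi.lt_def.1 hv
  have hne : (Finset.univ : Finset ι).Nonempty := ⟨k, Finset.mem_univ k⟩
  obtain ⟨j, -, hj⟩ := Finset.exists_mem_eq_sup' hne fun i => v i / u i
  have hle : ∀ i, v i / u i ≤ v j / u j := fun i =>
    hj ▸ Finset.le_sup' (fun i => v i / u i) (Finset.mem_univ i)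
  refine ⟨v j / u j, (div_pos hk (hu k)).trans_le (hle k), j, fun i => ?_,
    (div_mul_cancel₀ _ (hu j).ne').symm⟩
  exact (div_le_iff₀ (hu i)).1 (hle i)

theorem le_of_smul_le_map_of_map_le_smul [Fintype ι]
    (hmono : ∀ x y : ι → ℝ, 0 ≤ x → x ≤ y → f x ≤ f y)
    (hhom : ∀ t : ℝ, 0 < t → ∀ x : ι → ℝ, 0 ≤ x → f (t • x) = t • f x)
    {lam ρ : ℝ} {u v : ι → ℝ} (hv : 0 < v) (hlam : lam • v ≤ f v)
    (hu : ∀ i, 0 < u i) (hρ : f u ≤ ρ • u) : lam ≤ ρ := by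
  obtain ⟨t, ht, j, hvu, hvj⟩ := exists_le_smul_eq_mul hu hv
  have hchain : lam • v ≤ (t * ρ) • u :=
    calc lam • v ≤ f v := hlam
      _ ≤ f (t • u) := hmono v _ hv.le hvu
      _ = t • f u := hhom t ht u fun i => (hu i).le
      _ ≤ t • ρ • u := smul_le_smul_of_nonneg_left hρ ht.le
      _ = (t * ρ) • u := smul_smul t ρ u
  have hj : lam * v j ≤ ρ * v j :=
    calc lam * v j ≤ t * ρ * u j := hchain j
      _ = ρ * v j := by rw [hvj]; ring
  exact le_of_mul_le_mul_right hj (hvj ▸ mul_pos ht (hu j))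

theorem smul_le_map_smul_of_homogeneous
    (hhom : ∀ t : ℝ, 0 < t → ∀ x : ι → ℝ, 0 ≤ x → f (t • x) = t • f x)
    {ρ t : ℝ} (ht : 0 < t) {v : ι → ℝ} (hv : 0 ≤ v) (h : ρ • v ≤ f v) :
    ρ • t • v ≤ f (t • v) := by
  rw [hhom t ht v hv, smul_comm]
  exact smul_le_smul_of_nonneg_left h ht.le

def lowerCollatzWielandtSet (f : (ι → ℝ) → ι → ℝ) : Set ℝ :=
  {ρ | 0 ≤ ρ ∧ ∃ v : ι → ℝ, 0 ≤ v ∧ v ≠ 0 ∧ ρ • v ≤ f v}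

theorem zero_mem_lowerCollatzWielandtSet [Nonempty ι]
    (hmono : ∀ x y : ι → ℝ, 0 ≤ x → x ≤ y → f x ≤ f y)
    (hhom : ∀ t : ℝ, 0 < t → ∀ x : ι → ℝ, 0 ≤ x → f (t • x) = t • f x) :
    (0 : ℝ) ∈ lowerCollatzWielandtSet f :=
  ⟨le_rfl, 1, zero_le_one, one_ne_zero, by
    simpa using map_nonneg_of_monotone_of_homogeneous hmono hhom zero_le_one⟩

theorem le_norm_map_one_of_mem_lowerCollatzWielandtSet [Fintype ι]
    (hmono : ∀ x y : ι → ℝ, 0 ≤ x → x ≤ y → f x ≤ f y)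
    (hhom : ∀ t : ℝ, 0 < t → ∀ x : ι → ℝ, 0 ≤ x → f (t • x) = t • f x)
    {ρ : ℝ} (hρ : ρ ∈ lowerCollatzWielandtSet f) : ρ ≤ ‖f 1‖ := by
  obtain ⟨-, v, hv, hv0, hρv⟩ := hρ
  refine le_of_smul_le_map_of_map_le_smul hmono hhom (lt_of_le_of_ne hv (Ne.symm hv0)) hρv
    (fun _ => one_pos) fun i => ?_
  simp only [Pi.smul_apply, smul_eq_mul, mul_one]
  exact (Real.le_norm_self _).trans (norm_le_pi_norm (f 1) i)

theorem lowerCollatzWielandtSet_eq_image [Fintype ι]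
    (hhom : ∀ t : ℝ, 0 < t → ∀ x : ι → ℝ, 0 ≤ x → f (t • x) = t • f x)
    {M : ℝ} (hM : ∀ ρ ∈ lowerCollatzWielandtSet f, ρ ≤ M) :
    lowerCollatzWielandtSet f =
      Prod.fst '' {p ∈ Icc 0 M ×ˢ (Ici 0 ∩ sphere 0 1) | p.1 • p.2 ≤ f p.2} := by
  ext ρ
  constructor
  · intro hρ
    have hρM := hM ρ hρ
    obtain ⟨hρ0, v, hv, hv0, hρv⟩ := hρ
    have hnorm : 0 < ‖v‖⁻¹ := inv_pos.2 (norm_pos_iff.2 hv0)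
    refine ⟨(ρ, ‖v‖⁻¹ • v), ⟨⟨⟨hρ0, hρM⟩, smul_nonneg hnorm.le hv, ?_⟩, ?_⟩, rfl⟩
    · simpa using norm_smul_inv_norm (𝕜 := ℝ) hv0
    · exact smul_le_map_smul_of_homogeneous hhom hnorm hv hρv
  · rintro ⟨⟨ρ, v⟩, ⟨⟨⟨hρ0, -⟩, hv, hv1⟩, hρv⟩, rfl⟩
    exact ⟨hρ0, v, hv, ne_zero_of_mem_unit_sphere ⟨v, hv1⟩, hρv⟩

theorem isCompact_lowerCollatzWielandtSet [Fintype ι]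
    (hcont : ContinuousOn f (Ici 0))
    (hmono : ∀ x y : ι → ℝ, 0 ≤ x → x ≤ y → f x ≤ f y)
    (hhom : ∀ t : ℝ, 0 < t → ∀ x : ι → ℝ, 0 ≤ x → f (t • x) = t • f x) :
    IsCompact (lowerCollatzWielandtSet f) := by
  rw [lowerCollatzWielandtSet_eq_image hhom fun _ =>
    le_norm_map_one_of_mem_lowerCollatzWielandtSet hmono hhom]
  have hK : IsCompact (Icc 0 ‖f 1‖ ×ˢ (Ici (0 : ι → ℝ) ∩ sphere 0 1)) :=
    isCompact_Icc.prod ((isCompact_sphere 0 1).inter_left isClosed_Ici)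
  have hclosed := hK.isClosed.isClosed_le (continuous_fst.smul continuous_snd).continuousOn
    (hcont.comp continuous_snd.continuousOn fun p hp => hp.2.1)
  exact (hK.of_isClosed_subset hclosed (sep_subset _ _)).image continuous_fst

end CollatzWielandt

theorem collatz_wielandt_inequality_general {n : ℕ} (hn : 0 < n)
    (f : (Fin n → ℝ) → (Fin n → ℝ))
    (hcont : ContinuousOn f {x : Fin n → ℝ | 0 ≤ x})
    (hmono : ∀ x y : Fin n → ℝ, 0 ≤ x → x ≤ y → f x ≤ f y)
    (hhom : ∀ t : ℝ, 0 < t → ∀ x : Fin n → ℝ, 0 ≤ x → f (t • x) = t • f x) :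
    (∃ ρmax : ℝ, IsGreatest
        {ρ : ℝ | 0 ≤ ρ ∧ ∃ v : Fin n → ℝ, 0 ≤ v ∧ v ≠ 0 ∧ ρ • v ≤ f v} ρmax) ∧
    (∀ lam : ℝ, 0 ≤ lam → (∃ v : Fin n → ℝ, 0 ≤ v ∧ v ≠ 0 ∧ lam • v ≤ f v) →
      ∀ ρ : ℝ, 0 < ρ → (∃ u : Fin n → ℝ, (∀ i, 0 < u i) ∧ f u ≤ ρ • u) → lam ≤ ρ) := by
  have : Nonempty (Fin n) := ⟨⟨0, hn⟩⟩
  refine ⟨(isCompact_lowerCollatzWielandtSet hcont hmono hhom).exists_isGreatest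
    ⟨0, zero_mem_lowerCollatzWielandtSet hmono hhom⟩, ?_⟩
  rintro lam - ⟨v, hv, hv0, hlam⟩ ρ - ⟨u, hu, hρ⟩
  exact le_of_smul_le_map_of_map_le_smul hmono hhom (lt_of_le_of_ne hv (Ne.symm hv0)) hlam hu hρ

/-- nonlinear Collatz–Wielandt inequality.  For a continuous, monotone,
positively homogeneous self-map of ℝ₊ⁿ, the lower Collatz–Wielandt value
`max {ρ ≥ 0 : ∃ v ≥ 0, v ≠ 0, f v ≥ ρ v}` is attained, and any such `ρ` is bounded
above by every `ρ' > 0` admitting a positive vector `u` with `f u ≤ ρ' u`. -/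
theorem collatz_wielandt_inequality {n : ℕ} (hn : 0 < n)
    (f : (Fin n → ℝ) → (Fin n → ℝ))
    (hmaps : ∀ x : Fin n → ℝ, 0 ≤ x → 0 ≤ f x)
    (hcont : ContinuousOn f {x : Fin n → ℝ | 0 ≤ x})
    (hmono : ∀ x y : Fin n → ℝ, 0 ≤ x → x ≤ y → f x ≤ f y)
    (hhom : ∀ t : ℝ, 0 < t → ∀ x : Fin n → ℝ, 0 ≤ x → f (t • x) = t • f x) :
    (∃ ρmax : ℝ, IsGreatest
        {ρ : ℝ | 0 ≤ ρ ∧ ∃ v : Fin n → ℝ, 0 ≤ v ∧ v ≠ 0 ∧ ρ • v ≤ f v} ρmax) ∧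
    (∀ lam : ℝ, 0 ≤ lam → (∃ v : Fin n → ℝ, 0 ≤ v ∧ v ≠ 0 ∧ lam • v ≤ f v) →
      ∀ ρ : ℝ, 0 < ρ → (∃ u : Fin n → ℝ, (∀ i, 0 < u i) ∧ f u ≤ ρ • u) → lam ≤ ρ) :=
  collatz_wielandt_inequality_general hn f hcont hmono hhom
end

section
/- Let 𝒜 = {A₁, …, A_p} be a finite set of nonnegative n×n matrices, let u₁, …, u_m be nonnegative vectors in ℝ₊ⁿ whose sum has all entries positive, and let λ > 0. Suppose that for every a ∈ [p] and every index r ∈ [m], the inequality ⟨u_r, A_a x⟩ ≤ λ · max_s ⟨u_s, x⟩ holds for all x ∈ ℝ₊ⁿ. Then the map x ↦ max_s ⟨u_s, x⟩ is a monotone hemi-norm ν on ℝ₊ⁿ satisfying max_a ν(A_a x) ≤ λ ν(x) for all x ∈ ℝ₊ⁿ, and consequently λ ≥ ρ(𝒜), the joint spectral radius of 𝒜. -/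
open Matrix Filter Topology

/-! The hypothesis says exactly that `ν(A_a x) ≤ λ ν(x)` on the cone, so every product `P` of
`k` matrices of `𝒜` satisfies `ν(P x) ≤ λ^k ν(x)` there. Since `∑_s u_s` is a positive vector,
`(∑_s u_s)_i x_i ≤ m ν(x)` for `x ≥ 0`; applied to the columns `P e_j` this bounds every entry of
every length-`k` product by `C λ^k`, and the `k`-th roots of these bounds tend to `λ`. -/

noncomputable def maxDotProduct {ι κ : Type*} [Fintype ι] (u : κ → ι → ℝ) (x : ι → ℝ) : ℝ :=
  ⨆ s, u s ⬝ᵥ x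

section MaxDotProduct

variable {ι κ : Type*} [Fintype ι] {u : κ → ι → ℝ} {x : ι → ℝ}

theorem dotProduct_le_maxDotProduct [Finite κ] (s : κ) : u s ⬝ᵥ x ≤ maxDotProduct u x :=
  le_ciSup (f := fun s => u s ⬝ᵥ x) (Set.finite_range _).bddAbove s

theorem maxDotProduct_le {c : ℝ} (hc : 0 ≤ c) (h : ∀ s, u s ⬝ᵥ x ≤ c) :
    maxDotProduct u x ≤ c :=
  Real.iSup_le h hc

theorem maxDotProduct_nonneg (hu : ∀ s, 0 ≤ u s) (hx : 0 ≤ x) : 0 ≤ maxDotProduct u x :=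
  Real.iSup_nonneg fun s => dotProduct_nonneg_of_nonneg (hu s) hx

theorem maxDotProduct_smul {t : ℝ} (ht : 0 ≤ t) (x : ι → ℝ) :
    maxDotProduct u (t • x) = t * maxDotProduct u x := by
  simp only [maxDotProduct, dotProduct_smul, smul_eq_mul, Real.mul_iSup_of_nonneg ht]

theorem monotone_maxDotProduct [Finite κ] (hu : ∀ s, 0 ≤ u s) : Monotone (maxDotProduct u) :=
  fun _ _ hxy => ciSup_mono (Set.finite_range _).bddAbove fun s =>
    dotProduct_le_dotProduct_of_nonneg_left hxy (hu s)

theorem convexOn_maxDotProduct [Finite κ] (hu : ∀ s, 0 ≤ u s) :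
    ConvexOn ℝ (Set.Ici 0) (maxDotProduct u) := by
  refine ⟨convex_Ici 0, fun x hx y hy a b ha hb _ => maxDotProduct_le ?_ fun s => ?_⟩
  · exact add_nonneg (mul_nonneg ha (maxDotProduct_nonneg hu hx))
      (mul_nonneg hb (maxDotProduct_nonneg hu hy))
  · rw [dotProduct_add, dotProduct_smul, dotProduct_smul]
    gcongr <;> exact dotProduct_le_maxDotProduct s

theorem sum_apply_mul_le_card_mul_maxDotProduct [Fintype κ] (hu : ∀ s, 0 ≤ u s) (hx : 0 ≤ x)
    (i : ι) : (∑ s, u s i) * x i ≤ Fintype.card κ * maxDotProduct u x :=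
  calc (∑ s, u s i) * x i ≤ (∑ s, u s) ⬝ᵥ x := by
        simp only [dotProduct, Finset.sum_apply]
        exact Finset.single_le_sum (f := fun j => (∑ s, u s j) * x j)
          (fun j _ => mul_nonneg (Finset.sum_nonneg fun s _ => hu s j) (hx j)) (Finset.mem_univ i)
    _ = ∑ s, u s ⬝ᵥ x := sum_dotProduct _ _ _
    _ ≤ ∑ _s : κ, maxDotProduct u x := Finset.sum_le_sum fun s _ => dotProduct_le_maxDotProduct s
    _ = Fintype.card κ * maxDotProduct u x := by simp

theorem eq_zero_of_maxDotProduct_eq_zero [Fintype κ] (hu : ∀ s, 0 ≤ u s)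
    (hpos : ∀ i, 0 < ∑ s, u s i) (hx : 0 ≤ x) (h : maxDotProduct u x = 0) : x = 0 := by
  funext i
  have hi := sum_apply_mul_le_card_mul_maxDotProduct hu hx i
  rw [h, mul_zero] at hi
  exact le_antisymm (nonpos_of_mul_nonpos_right hi (hpos i)) (hx i)

end MaxDotProduct

section NonnegMatrix

variable {ι : Type*} [Fintype ι] {x : ι → ℝ}

theorem mulVec_nonneg_of_nonneg {M : Matrix ι ι ℝ} (hM : ∀ i j, 0 ≤ M i j) (hx : 0 ≤ x) :
    0 ≤ M *ᵥ x :=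
  fun i => Finset.sum_nonneg fun j _ => mul_nonneg (hM i j) (hx j)

variable [DecidableEq ι]

theorem list_prod_mulVec_nonneg {L : List (Matrix ι ι ℝ)} (hL : ∀ M ∈ L, ∀ i j, 0 ≤ M i j)
    (hx : 0 ≤ x) : 0 ≤ L.prod *ᵥ x := by
  induction L with
  | nil => simpa using hx
  | cons M L ih =>
    rw [List.prod_cons, ← mulVec_mulVec]
    exact mulVec_nonneg_of_nonneg (hL M List.mem_cons_self)
      (ih fun N hN => hL N (List.mem_cons_of_mem _ hN))

theorem apply_list_prod_mulVec_le_pow_mul {f : (ι → ℝ) → ℝ} {lam : ℝ} (hlam : 0 ≤ lam)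
    {L : List (Matrix ι ι ℝ)}
    (hL : ∀ M ∈ L, (∀ i j, 0 ≤ M i j) ∧ ∀ x, 0 ≤ x → f (M *ᵥ x) ≤ lam * f x) (hx : 0 ≤ x) :
    f (L.prod *ᵥ x) ≤ lam ^ L.length * f x := by
  induction L with
  | nil => simp
  | cons M L ih =>
    have hL' : ∀ N ∈ L, _ := fun N hN => hL N (List.mem_cons_of_mem _ hN)
    have hPx : 0 ≤ L.prod *ᵥ x := list_prod_mulVec_nonneg (fun N hN => (hL' N hN).1) hx
    rw [List.prod_cons, ← mulVec_mulVec, List.length_cons, pow_succ', mul_assoc]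
    calc f (M *ᵥ L.prod *ᵥ x) ≤ lam * f (L.prod *ᵥ x) := (hL M List.mem_cons_self).2 _ hPx
      _ ≤ lam * (lam ^ L.length * f x) := by gcongr; exact ih hL'

theorem abs_list_prod_apply_le {κ : Type*} [Fintype κ] {u : κ → ι → ℝ} (hu : ∀ s, 0 ≤ u s)
    (hpos : ∀ i, 0 < ∑ s, u s i) {lam : ℝ} (hlam : 0 ≤ lam) {L : List (Matrix ι ι ℝ)}
    (hL : ∀ M ∈ L, (∀ i j, 0 ≤ M i j) ∧
      ∀ x, 0 ≤ x → maxDotProduct u (M *ᵥ x) ≤ lam * maxDotProduct u x) (i j : ι) :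
    |L.prod i j| ≤
      Fintype.card κ * maxDotProduct u (Pi.single j 1) / (∑ s, u s i) * lam ^ L.length := by
  have hej : (0 : ι → ℝ) ≤ Pi.single j 1 := Pi.single_nonneg.2 zero_le_one
  have hcol : (L.prod *ᵥ Pi.single j 1) i = L.prod i j := by simp
  have hPej := list_prod_mulVec_nonneg (fun M hM => (hL M hM).1) hej
  rw [← hcol, abs_of_nonneg (hPej i), div_mul_eq_mul_div, le_div_iff₀ (hpos i), mul_comm]
  calc (∑ s, u s i) * (L.prod *ᵥ Pi.single j 1) i
      ≤ Fintype.card κ * maxDotProduct u (L.prod *ᵥ Pi.single j 1) :=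
        sum_apply_mul_le_card_mul_maxDotProduct hu hPej i
    _ ≤ Fintype.card κ * (lam ^ L.length * maxDotProduct u (Pi.single j 1)) := by
        gcongr; exact apply_list_prod_mulVec_le_pow_mul hlam hL hej
    _ = _ := by ring

end NonnegMatrix

theorem le_of_tendsto_of_le_rpow_one_div {g : ℕ → ℝ} {ρ C lam : ℝ} (hC : 0 ≤ C) (hlam : 0 ≤ lam)
    (hg : Tendsto g atTop (𝓝 ρ)) (hle : ∀ k, 0 < k → g k ≤ (C * lam ^ k) ^ ((1 : ℝ) / k)) :
    ρ ≤ lam := by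
  have hC1 : 0 < C + 1 := by linarith
  have hlim : Tendsto (fun k : ℕ => (C + 1) ^ ((1 : ℝ) / k) * lam) atTop (𝓝 lam) := by
    simpa using ((Real.continuousAt_const_rpow hC1.ne').tendsto.comp
      tendsto_one_div_atTop_nhds_zero_nat).mul_const lam
  refine le_of_tendsto_of_tendsto hg hlim ((eventually_gt_atTop 0).mono fun k hk => ?_)
  calc g k ≤ (C * lam ^ k) ^ ((1 : ℝ) / k) := hle k hk
    _ ≤ ((C + 1) * lam ^ k) ^ ((1 : ℝ) / k) := by gcongr; linarith
    _ = (C + 1) ^ ((1 : ℝ) / k) * lam := by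
        rw [Real.mul_rpow hC1.le (by positivity), one_div, Real.pow_rpow_inv_natCast hlam hk.ne']

theorem jsr_le_of_abs_list_prod_le {ι α : Type*} [Fintype ι] [DecidableEq ι]
    {A : α → Matrix ι ι ℝ} {ρ lam : ℝ} {K : ι → ι → ℝ} (hK : ∀ i j, 0 ≤ K i j) (hlam : 0 ≤ lam)
    (hρ : Tendsto (fun k : ℕ => ⨆ w : Fin k → α,
        (⨆ i, ⨆ j, |((List.ofFn fun j => A (w j)).prod) i j|) ^ ((1 : ℝ) / k)) atTop (𝓝 ρ))
    (hbound : ∀ k (w : Fin k → α) i j,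
      |((List.ofFn fun j => A (w j)).prod) i j| ≤ K i j * lam ^ k) :
    ρ ≤ lam := by
  set C := ⨆ i, ⨆ j, K i j
  have hKC : ∀ i j, K i j ≤ C := fun i j =>
    le_ciSup_of_le (Set.finite_range _).bddAbove i (le_ciSup (Set.finite_range _).bddAbove j)
  have hC : 0 ≤ C := Real.iSup_nonneg fun i => Real.iSup_nonneg (hK i)
  refine le_of_tendsto_of_le_rpow_one_div hC hlam hρ fun k _ => Real.iSup_le (fun w => ?_) ?_
  · have hCk : 0 ≤ C * lam ^ k := by positivity
    gcongr
    · exact Real.iSup_nonneg fun i => Real.iSup_nonneg fun j => abs_nonneg _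
    · exact Real.iSup_le (fun i => Real.iSup_le (fun j => (hbound k w i j).trans
        (mul_le_mul_of_nonneg_right (hKC i j) (by positivity))) hCk) hCk
  · positivity

theorem extremal_heminorm_from_eigenvector_general {n p m : ℕ}
    (A : Fin p → Matrix (Fin n) (Fin n) ℝ)
    (hA : ∀ a, ∀ i j, 0 ≤ A a i j)
    (u : Fin m → Fin n → ℝ) (hu : ∀ r, 0 ≤ u r)
    (husum : ∀ i, 0 < ∑ r, u r i)
    (lam : ℝ) (hlam : 0 < lam)
    (hineq : ∀ (a : Fin p) (r : Fin m) (x : Fin n → ℝ), 0 ≤ x →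
      u r ⬝ᵥ (A a).mulVec x ≤ lam * ⨆ s : Fin m, u s ⬝ᵥ x)
    (ρ : ℝ)
    (hρ : Tendsto (fun k : ℕ => ⨆ w : Fin k → Fin p,
        (⨆ i : Fin n, ⨆ j : Fin n, |((List.ofFn fun j => A (w j)).prod) i j|) ^ ((1 : ℝ) / k))
      atTop (nhds ρ))
    (ν : (Fin n → ℝ) → ℝ) (hν : ∀ x, ν x = ⨆ s : Fin m, u s ⬝ᵥ x) :
    ((∀ x y : Fin n → ℝ, 0 ≤ x → 0 ≤ y → ∀ t : ℝ, 0 ≤ t → t ≤ 1 →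
        ν (t • x + (1 - t) • y) ≤ t * ν x + (1 - t) * ν y) ∧
      (∀ t : ℝ, 0 < t → ∀ x : Fin n → ℝ, 0 ≤ x → ν (t • x) = t * ν x) ∧
      (∀ x y : Fin n → ℝ, 0 ≤ x → x ≤ y → ν x ≤ ν y) ∧
      (∀ x : Fin n → ℝ, 0 ≤ x → ν x = 0 → x = 0) ∧
      (∀ (a : Fin p) (x : Fin n → ℝ), 0 ≤ x → ν ((A a).mulVec x) ≤ lam * ν x)) ∧
    ρ ≤ lam := by
  obtain rfl : ν = maxDotProduct u := funext hν
  have hextremal : ∀ a x, 0 ≤ x → maxDotProduct u (A a *ᵥ x) ≤ lam * maxDotProduct u x :=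
    fun a x hx => maxDotProduct_le (mul_nonneg hlam.le (maxDotProduct_nonneg hu hx))
      fun r => hineq a r x hx
  refine ⟨⟨fun x y hx hy t ht ht1 =>
      (convexOn_maxDotProduct hu).2 hx hy ht (by linarith) (by ring),
    fun t ht x _ => maxDotProduct_smul ht.le x,
    fun _ _ _ hxy => monotone_maxDotProduct hu hxy,
    fun _ hx => eq_zero_of_maxDotProduct_eq_zero hu husum hx,
    hextremal⟩, ?_⟩
  refine jsr_le_of_abs_list_prod_le
    (K := fun i j => m * maxDotProduct u (Pi.single j 1) / ∑ s, u s i)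
    (fun i j => div_nonneg (mul_nonneg m.cast_nonneg
      (maxDotProduct_nonneg hu (Pi.single_nonneg.2 zero_le_one))) (husum i).le)
    hlam.le hρ fun k w i j => ?_
  simpa using abs_list_prod_apply_le hu husum hlam.le (L := List.ofFn fun j => A (w j))
    (by simpa [List.mem_ofFn] using fun l => ⟨hA (w l), hextremal (w l)⟩) i j

/-- if nonnegative vectors `u₁,…,u_m` with positive sum and `λ > 0`
satisfy `⟨u_r, A_a x⟩ ≤ λ · max_s ⟨u_s, x⟩` for all `a`, `r` and `x ≥ 0`, then
`ν x = max_s ⟨u_s, x⟩` is a monotone hemi-norm with `max_a ν (A_a x) ≤ λ ν x`,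
and consequently the joint spectral radius `ρ(𝒜)` satisfies `ρ(𝒜) ≤ λ`. -/
theorem extremal_heminorm_from_eigenvector {n p m : ℕ} (hp : 0 < p) (hm : 0 < m)
    (A : Fin p → Matrix (Fin n) (Fin n) ℝ)
    (hA : ∀ a, ∀ i j, 0 ≤ A a i j)
    (u : Fin m → Fin n → ℝ) (hu : ∀ r, 0 ≤ u r)
    (husum : ∀ i, 0 < ∑ r, u r i)
    (lam : ℝ) (hlam : 0 < lam)
    (hineq : ∀ (a : Fin p) (r : Fin m) (x : Fin n → ℝ), 0 ≤ x →
      u r ⬝ᵥ (A a).mulVec x ≤ lam * ⨆ s : Fin m, u s ⬝ᵥ x)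
    (ρ : ℝ)
    (hρ : Tendsto (fun k : ℕ => ⨆ w : Fin k → Fin p,
        (⨆ i : Fin n, ⨆ j : Fin n, |((List.ofFn fun j => A (w j)).prod) i j|) ^ ((1 : ℝ) / k))
      atTop (nhds ρ))
    (ν : (Fin n → ℝ) → ℝ) (hν : ∀ x, ν x = ⨆ s : Fin m, u s ⬝ᵥ x) :
    ((∀ x y : Fin n → ℝ, 0 ≤ x → 0 ≤ y → ∀ t : ℝ, 0 ≤ t → t ≤ 1 →
        ν (t • x + (1 - t) • y) ≤ t * ν x + (1 - t) * ν y) ∧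
      (∀ t : ℝ, 0 < t → ∀ x : Fin n → ℝ, 0 ≤ x → ν (t • x) = t * ν x) ∧
      (∀ x y : Fin n → ℝ, 0 ≤ x → x ≤ y → ν x ≤ ν y) ∧
      (∀ x : Fin n → ℝ, 0 ≤ x → ν x = 0 → x = 0) ∧
      (∀ (a : Fin p) (x : Fin n → ℝ), 0 ≤ x → ν ((A a).mulVec x) ≤ lam * ν x)) ∧
    ρ ≤ lam :=
  extremal_heminorm_from_eigenvector_general A hA u hu husum lam hlam hineq ρ hρ ν hν
end

section
/- For the operators T^d of the hierarchy, the nonlinear spectral radius is non-increasing in d: r(T^{d+1}) ≤ r(T^d), provided the finite set of nonnegative matrices 𝒜 is positively irreducible. -/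
open Matrix

/-- Transition map of the De Bruijn automaton of depth `d` on `p` symbols:
`τ(i₁⋯i_d, a) = i₂⋯i_d a`. -/
def deBruijnShift {p : ℕ} (d : ℕ) (r : Fin d → Fin p) (a : Fin p) : Fin d → Fin p :=
  fun i => if h : (i : ℕ) + 1 < d then r ⟨(i : ℕ) + 1, h⟩ else a

/-- The depth-`d` operator of the hierarchy, acting on the product cone
`∏_{s ∈ [p]^d} ℝ₊ⁿ` (encoded on the index type `(Fin d → Fin p) × Fin n`):
`T^d_s(x) = sup { A_aᵀ x_r : τ^d(r, a) = s }`, componentwise. -/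
noncomputable def deBruijnOp {n p : ℕ} (A : Fin p → Matrix (Fin n) (Fin n) ℝ) (d : ℕ)
    (x : (Fin d → Fin p) × Fin n → ℝ) : (Fin d → Fin p) × Fin n → ℝ :=
  fun q => ⨆ ra : {ra : (Fin d → Fin p) × Fin p // deBruijnShift d ra.1 ra.2 = q.1},
    (A ra.1.2)ᵀ.mulVec (fun j => x (ra.1.1, j)) q.2

/-- The (nonlinear) spectral radius, via the Collatz–Wielandt formula
`r(f) = inf {ρ > 0 : ∃ u > 0, f(u) ≤ ρ u}`. -/
noncomputable def cwRadius {ι : Type*} [Fintype ι] (f : (ι → ℝ) → (ι → ℝ)) : ℝ :=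
  sInf {ρ : ℝ | 0 < ρ ∧ ∃ u : ι → ℝ, (∀ i, 0 < u i) ∧ f u ≤ ρ • u}

/-- A family of nonnegative matrices is positively irreducible if no non-trivial
face of ℝ₊ⁿ is invariant by all the matrices. -/
def PosIrredFamily {n p : ℕ} (A : Fin p → Matrix (Fin n) (Fin n) ℝ) : Prop :=
  ∀ I : Set (Fin n), I.Nonempty → I ≠ Set.univ →
    ¬ (∀ (a : Fin p) (x : Fin n → ℝ), (0 ≤ x ∧ ∀ i ∉ I, x i = 0) →
        (0 ≤ (A a).mulVec x ∧ ∀ i ∉ I, (A a).mulVec x i = 0))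


/-!
A positive vector `u` with `T^d u ≤ ρ u` lifts to the depth-`d + 1` cone as
`ũ_r = u_{tail r}`, and `T^{d+1} ũ ≤ ρ ũ` with the same `ρ`: the tail of a depth-`d + 1`
De Bruijn transition `τ(r, a) = s` is the depth-`d` transition `τ(tail r, a) = tail s`,
so every term of the supremum defining `(T^{d+1} ũ)_s` already occurs in `(T^d u)_{tail s}`.
Hence the Collatz–Wielandt set of `T^d` is contained in that of `T^{d+1}`.
-/

lemma deBruijnShift_tail {p d : ℕ} (r : Fin (d + 1) → Fin p) (a : Fin p) :
    deBruijnShift d (Fin.tail r) a = Fin.tail (deBruijnShift (d + 1) r a) := by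
  funext i
  simp only [deBruijnShift, Fin.tail, Fin.val_succ]
  split_ifs <;> first | rfl | omega

lemma deBruijnOp_succ_tail_le {n p d : ℕ} (A : Fin p → Matrix (Fin n) (Fin n) ℝ) {ρ : ℝ}
    {u : (Fin d → Fin p) × Fin n → ℝ} (hu : 0 ≤ ρ • u) (h : deBruijnOp A d u ≤ ρ • u) :
    deBruijnOp A (d + 1) (fun q => u (Fin.tail q.1, q.2)) ≤
      ρ • fun q => u (Fin.tail q.1, q.2) := by
  intro q
  -- `hu` covers an empty supremum, which is `0` in `ℝ`
  refine Real.iSup_le (fun ⟨⟨r, a⟩, hra⟩ => ?_) (hu _)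
  calc (A a)ᵀ.mulVec (fun j => u (Fin.tail r, j)) q.2
      ≤ deBruijnOp A d u (Fin.tail q.1, q.2) :=
        le_ciSup (f := fun rb : {rb : (Fin d → Fin p) × Fin p //
            deBruijnShift d rb.1 rb.2 = Fin.tail q.1} =>
            (A rb.1.2)ᵀ.mulVec (fun j => u (rb.1.1, j)) q.2)
          (Set.finite_range _).bddAbove ⟨(Fin.tail r, a), by rw [deBruijnShift_tail, hra]⟩
    _ ≤ (ρ • u) (Fin.tail q.1, q.2) := h _

lemma cwRadius_le_cwRadius_of_lift {ι κ : Type*} [Fintype ι] [Fintype κ]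
    {f : (ι → ℝ) → (ι → ℝ)} {g : (κ → ℝ) → (κ → ℝ)}
    (hlift : ∀ ρ : ℝ, 0 < ρ → ∀ u : ι → ℝ, (∀ i, 0 < u i) → f u ≤ ρ • u →
      ∃ v : κ → ℝ, (∀ k, 0 < v k) ∧ g v ≤ ρ • v) :
    cwRadius g ≤ cwRadius f := by
  refine csInf_le_csInf ⟨0, fun ρ hρ => hρ.1.le⟩ ?_
    fun ρ ⟨hρ, u, hu, hfu⟩ => ⟨hρ, hlift ρ hρ u hu hfu⟩
  -- `sInf ∅ = 0`, so the set for `f` must be nonempty: `u = 1` works for `ρ` above every `f 1 i`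
  refine ⟨1 + ∑ i, |f 1 i|, by positivity, 1, fun _ => one_pos, fun i => ?_⟩
  have hi : |f 1 i| ≤ ∑ j, |f 1 j| :=
    Finset.single_le_sum (fun j _ => abs_nonneg (f 1 j)) (Finset.mem_univ i)
  simpa using (le_abs_self (f 1 i)).trans (hi.trans (le_add_of_nonneg_left zero_le_one))

theorem cwRadius_deBruijnOp_antitone_general {n p : ℕ}
    (A : Fin p → Matrix (Fin n) (Fin n) ℝ)
    (d : ℕ) :
    cwRadius (deBruijnOp A (d + 1)) ≤ cwRadius (deBruijnOp A d) :=
  cwRadius_le_cwRadius_of_lift fun _ hρ u hu h =>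
    ⟨fun q => u (Fin.tail q.1, q.2), fun _ => hu _,
      deBruijnOp_succ_tail_le A (fun q => (smul_pos hρ (hu q)).le) h⟩

/-- for a positively irreducible family of nonnegative matrices,
the spectral radii of the hierarchy are non-increasing: `r(T^{d+1}) ≤ r(T^d)`. -/
theorem cwRadius_deBruijnOp_antitone {n p : ℕ} (hn : 0 < n) (hp : 0 < p)
    (A : Fin p → Matrix (Fin n) (Fin n) ℝ)
    (hA : ∀ a, ∀ i j, 0 ≤ A a i j)
    (hirr : PosIrredFamily A) (d : ℕ) :
    cwRadius (deBruijnOp A (d + 1)) ≤ cwRadius (deBruijnOp A d) :=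
  cwRadius_deBruijnOp_antitone_general A d
end

section
/- Let 𝒜 be a positively irreducible finite set of nonnegative n×n matrices and T^0(x) = sup_{1≤a≤p} A_a^T x on ℝ₊ⁿ. Then r(T^0) ≤ n · ρ(𝒜), where ρ(𝒜) is the joint spectral radius. -/
open Matrix Filter

/-- The level-0 operator `T⁰(x) = sup_{1 ≤ a ≤ p} A_aᵀ x` (componentwise sup). -/
noncomputable def T0 {n p : ℕ} (A : Fin p → Matrix (Fin n) (Fin n) ℝ)
    (x : Fin n → ℝ) : Fin n → ℝ :=
  fun i => ⨆ a : Fin p, (A a)ᵀ.mulVec x i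

/-!
Let `g k i` be the largest `i`-th column sum of a product of `k` matrices of the family. Bounding
each term of `(A_aᵀ g_k)_i = ∑_j g_k(j) A_a(j,i)` by `g_{k+1}(i)` gives `A_aᵀ g_k ≤ n g_{k+1}`;
the factor `n` is the price of choosing the maximizing word separately for each `j`.
Given `r > ρ(𝒜)`, we have `g_{N+1} ≤ r^{N+1}` for large `N`, because `g_k ≤ n · (max entry of a
product of length k)`. The vector `u = ∑_{k ≤ N} r^{-k} g_k ≥ g_0 = 𝟙` is then positive and, by
telescoping, `A_aᵀ u ≤ n r u` for every `a`, hence `T⁰ u ≤ n r u` and `r(T⁰) ≤ n r`.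
-/

theorem eventually_mul_le_pow_of_rpow_le {s : ℕ → ℝ} {ρ r C : ℝ}
    (hs : Tendsto s atTop (nhds ρ)) (hr : ρ < r) (hC : 0 < C) :
    ∀ᶠ k : ℕ in atTop, ∀ x : ℝ, 0 ≤ x → x ^ ((1 : ℝ) / k) ≤ s k → C * x ≤ r ^ k := by
  have hC_root : Tendsto (fun k : ℕ => C ^ ((1 : ℝ) / k)) atTop (nhds 1) := by
    simpa [Function.comp_def] using (Real.continuousAt_const_rpow hC.ne').tendsto.comp
      (tendsto_const_div_atTop_nhds_zero_nat 1)
  have hlim : Tendsto (fun k : ℕ => C ^ ((1 : ℝ) / k) * s k) atTop (nhds ρ) := by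
    simpa using hC_root.mul hs
  filter_upwards [hlim.eventually_lt_const hr, eventually_ne_atTop 0] with k hk hk0 x hx hxs
  have hroot : (C * x) ^ ((k : ℝ)⁻¹) < r := calc
    (C * x) ^ ((k : ℝ)⁻¹) = C ^ ((1 : ℝ) / k) * x ^ ((1 : ℝ) / k) := by
      rw [Real.mul_rpow hC.le hx, one_div]
    _ ≤ C ^ ((1 : ℝ) / k) * s k := mul_le_mul_of_nonneg_left hxs (by positivity)
    _ < r := hk
  have hr0 : 0 < r := (Real.rpow_nonneg (by positivity) _).trans_lt hroot
  rw [Real.rpow_inv_lt_iff_of_pos (by positivity) hr0.le (by positivity),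
    Real.rpow_natCast] at hroot
  exact hroot.le

theorem map_sum_le_smul_sum {E : Type*} [AddCommGroup E] [PartialOrder E] [IsOrderedAddMonoid E]
    [Module ℝ E] [PosSMulMono ℝ E] (L : E →ₗ[ℝ] E) (g : ℕ → E) {m r : ℝ} (hm : 0 ≤ m)
    (hr : 0 < r) (hstep : ∀ k, L (g k) ≤ m • g (k + 1)) (N : ℕ)
    (hN : r⁻¹ ^ (N + 1) • g (N + 1) ≤ g 0) :
    L (∑ k ∈ Finset.range (N + 1), r⁻¹ ^ k • g k) ≤
      (m * r) • ∑ k ∈ Finset.range (N + 1), r⁻¹ ^ k • g k := by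
  set u := ∑ k ∈ Finset.range (N + 1), r⁻¹ ^ k • g k with hu
  have shift : ∑ k ∈ Finset.range (N + 1), r⁻¹ ^ (k + 1) • g (k + 1) =
      u - g 0 + r⁻¹ ^ (N + 1) • g (N + 1) := by
    rw [Finset.sum_range_succ, hu, Finset.sum_range_succ' _ N]
    simp only [pow_zero, one_smul]
    abel
  calc L u = ∑ k ∈ Finset.range (N + 1), r⁻¹ ^ k • L (g k) := by simp [u]
    _ ≤ ∑ k ∈ Finset.range (N + 1), r⁻¹ ^ k • m • g (k + 1) :=
        Finset.sum_le_sum fun k _ => smul_le_smul_of_nonneg_left (hstep k) (by positivity)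
    _ = (m * r) • ∑ k ∈ Finset.range (N + 1), r⁻¹ ^ (k + 1) • g (k + 1) := by
        rw [Finset.smul_sum]
        refine Finset.sum_congr rfl fun k _ => ?_
        rw [smul_smul, smul_smul, pow_succ]
        congr 1
        field_simp
    _ = (m * r) • (u - g 0 + r⁻¹ ^ (N + 1) • g (N + 1)) := by rw [shift]
    _ ≤ (m * r) • u := by
        refine smul_le_smul_of_nonneg_left ?_ (by positivity)
        rwa [sub_add_eq_add_sub, sub_le_iff_le_add, add_le_add_iff_left]

section WordProducts

variable {ι α : Type*} [Fintype ι] [DecidableEq ι] (A : α → Matrix ι ι ℝ)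

noncomputable def wordProd {k : ℕ} (w : Fin k → α) : Matrix ι ι ℝ :=
  (List.ofFn fun j => A (w j)).prod

noncomputable def maxEntry {k : ℕ} (w : Fin k → α) : ℝ :=
  ⨆ i, ⨆ j, |wordProd A w i j|

noncomputable def maxColumnSum (k : ℕ) (i : ι) : ℝ :=
  ⨆ w : Fin k → α, ∑ j, wordProd A w j i

variable {A}

theorem wordProd_snoc {k : ℕ} (w : Fin k → α) (a : α) :
    wordProd A (Fin.snoc w a) = wordProd A w * A a := by
  rw [wordProd, List.ofFn_succ', List.prod_concat]
  simp [wordProd]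

theorem wordProd_nonneg (hA : ∀ a i j, 0 ≤ A a i j) {k : ℕ} (w : Fin k → α) (i j : ι) :
    0 ≤ wordProd A w i j := by
  refine List.prod_induction (fun M : Matrix ι ι ℝ => ∀ i j, 0 ≤ M i j) ?_ ?_ ?_ i j
  · intro M M' hM hM' i j
    exact Finset.sum_nonneg fun l _ => mul_nonneg (hM i l) (hM' l j)
  · intro i j
    rw [Matrix.one_apply]
    split_ifs <;> norm_num
  · simp only [List.mem_ofFn, forall_exists_index, forall_apply_eq_imp_iff]
    exact fun m => hA (w m)

theorem maxEntry_nonneg {k : ℕ} (w : Fin k → α) : 0 ≤ maxEntry A w :=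
  Real.iSup_nonneg fun _ => Real.iSup_nonneg fun _ => abs_nonneg _

theorem abs_wordProd_le_maxEntry {k : ℕ} (w : Fin k → α) (i j : ι) :
    |wordProd A w i j| ≤ maxEntry A w :=
  (le_ciSup (f := fun j => |wordProd A w i j|) (Set.finite_range _).bddAbove j).trans
    (le_ciSup (f := fun i => ⨆ j, |wordProd A w i j|) (Set.finite_range _).bddAbove i)

theorem maxColumnSum_zero : maxColumnSum A 0 = 1 := by
  ext i
  simp [maxColumnSum, wordProd, Matrix.one_apply]

theorem maxColumnSum_nonneg (hA : ∀ a i j, 0 ≤ A a i j) (k : ℕ) (i : ι) :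
    0 ≤ maxColumnSum A k i :=
  Real.iSup_nonneg fun w => Finset.sum_nonneg fun j _ => wordProd_nonneg hA w j i

theorem maxColumnSum_mul_le_succ [Finite α] (hA : ∀ a i j, 0 ≤ A a i j) (k : ℕ) (a : α)
    (i j : ι) :
    maxColumnSum A k j * A a j i ≤ maxColumnSum A (k + 1) i := by
  rw [maxColumnSum, Real.iSup_mul_of_nonneg (hA a j i)]
  refine Real.iSup_le (fun w => ?_) (maxColumnSum_nonneg hA _ i)
  calc (∑ l, wordProd A w l j) * A a j i
      ≤ ∑ l, ∑ m, wordProd A w l m * A a m i := by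
        rw [Finset.sum_mul]
        exact Finset.sum_le_sum fun l _ => Finset.single_le_sum
          (fun m _ => mul_nonneg (wordProd_nonneg hA w l m) (hA a m i)) (Finset.mem_univ j)
    _ = ∑ l, wordProd A (Fin.snoc w a : Fin (k + 1) → α) l i := by
        simp [wordProd_snoc, Matrix.mul_apply]
    _ ≤ maxColumnSum A (k + 1) i :=
        le_ciSup (f := fun w : Fin (k + 1) → α => ∑ l, wordProd A w l i)
          (Set.finite_range _).bddAbove _

theorem vecMul_maxColumnSum_le [Finite α] (hA : ∀ a i j, 0 ≤ A a i j) (k : ℕ) (a : α) :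
    maxColumnSum A k ᵥ* A a ≤ (Fintype.card ι : ℝ) • maxColumnSum A (k + 1) := by
  intro i
  calc (maxColumnSum A k ᵥ* A a) i = ∑ j, maxColumnSum A k j * A a j i := rfl
    _ ≤ Finset.univ.card • maxColumnSum A (k + 1) i :=
        Finset.sum_le_card_nsmul _ _ _ fun j _ => maxColumnSum_mul_le_succ hA k a i j
    _ = _ := by simp

theorem maxColumnSum_le_of_card_mul_maxEntry_le {k : ℕ} {r : ℝ} (hr : 0 ≤ r)
    (h : ∀ w : Fin k → α, Fintype.card ι * maxEntry A w ≤ r) (i : ι) :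
    maxColumnSum A k i ≤ r :=
  Real.iSup_le (fun w => calc
    ∑ j, wordProd A w j i ≤ ∑ _j : ι, maxEntry A w :=
        Finset.sum_le_sum fun j _ => (le_abs_self _).trans (abs_wordProd_le_maxEntry w j i)
    _ = Fintype.card ι * maxEntry A w := by simp
    _ ≤ r := h w) hr

theorem exists_pos_vecMul_le_smul [Finite α] (hA : ∀ a i j, 0 ≤ A a i j) {r : ℝ} (hr : 0 < r)
    {N : ℕ} (hN : ∀ i, maxColumnSum A (N + 1) i ≤ r ^ (N + 1)) :
    ∃ u : ι → ℝ, (∀ i, 0 < u i) ∧ ∀ a, u ᵥ* A a ≤ (Fintype.card ι * r) • u := by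
  set u := ∑ k ∈ Finset.range (N + 1), r⁻¹ ^ k • maxColumnSum A k
  refine ⟨u, fun i => ?_, fun a => ?_⟩
  · calc (0 : ℝ) < r⁻¹ ^ 0 * maxColumnSum A 0 i := by simp [maxColumnSum_zero]
      _ ≤ u i := by
        simp only [u, Finset.sum_apply, Pi.smul_apply, smul_eq_mul]
        exact Finset.single_le_sum (fun k _ => mul_nonneg (by positivity)
          (maxColumnSum_nonneg hA k i)) (Finset.mem_range.2 N.succ_pos)
  · refine map_sum_le_smul_sum (A a).vecMulLinear _ (by positivity) hr
      (vecMul_maxColumnSum_le hA · a) N fun i => ?_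
    rw [maxColumnSum_zero, Pi.smul_apply, smul_eq_mul, Pi.one_apply, inv_pow,
      inv_mul_le_one₀ (by positivity)]
    exact hN i

end WordProducts

theorem cwRadius_le {ι : Type*} [Fintype ι] {f : (ι → ℝ) → ι → ℝ} {c : ℝ} (hc : 0 < c)
    {u : ι → ℝ} (hu : ∀ i, 0 < u i) (hfu : f u ≤ c • u) : cwRadius f ≤ c :=
  csInf_le ⟨0, fun _ h => h.1.le⟩ ⟨hc, u, hu, hfu⟩

theorem T0_le_smul {n p : ℕ} {A : Fin p → Matrix (Fin n) (Fin n) ℝ} {c : ℝ} {u : Fin n → ℝ}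
    (hAu : ∀ a, u ᵥ* A a ≤ c • u) (hcu : 0 ≤ c • u) : T0 A u ≤ c • u := fun i =>
  Real.iSup_le (fun a => by simpa only [Matrix.mulVec_transpose] using hAu a i) (hcu i)

theorem cwRadius_T0_le_general {n p : ℕ} (hn : 0 < n)
    (A : Fin p → Matrix (Fin n) (Fin n) ℝ)
    (hA : ∀ a, ∀ i j, 0 ≤ A a i j)
    (ρ : ℝ)
    (hρ : Tendsto (fun k : ℕ => ⨆ w : Fin k → Fin p,
        (⨆ i : Fin n, ⨆ j : Fin n, |((List.ofFn fun j => A (w j)).prod) i j|) ^ ((1 : ℝ) / k))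
      atTop (nhds ρ)) :
    cwRadius (T0 A) ≤ (n : ℝ) * ρ := by
  change Tendsto (fun k : ℕ => ⨆ w : Fin k → Fin p, maxEntry A w ^ ((1 : ℝ) / k)) _ _ at hρ
  have hρ0 : 0 ≤ ρ := ge_of_tendsto' hρ fun k => Real.iSup_nonneg fun w =>
    Real.rpow_nonneg (maxEntry_nonneg w) _
  have hn' : (0 : ℝ) < n := by exact_mod_cast hn
  suffices key : ∀ r, ρ < r → cwRadius (T0 A) ≤ n * r by
    refine le_of_forall_gt_imp_ge_of_dense fun c hc => ?_
    simpa [mul_div_cancel₀ c hn'.ne'] using key (c / n) (by rwa [lt_div_iff₀ hn', mul_comm])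
  intro r hr
  have hr0 : 0 < r := hρ0.trans_lt hr
  obtain ⟨N, hN⟩ := ((tendsto_add_atTop_nat 1).eventually
    (eventually_mul_le_pow_of_rpow_le hρ hr hn')).exists
  have hcol : ∀ i, maxColumnSum A (N + 1) i ≤ r ^ (N + 1) := by
    refine maxColumnSum_le_of_card_mul_maxEntry_le (by positivity) fun w => ?_
    simpa using hN _ (maxEntry_nonneg w)
      (le_ciSup (f := fun w : Fin (N + 1) → Fin p => maxEntry A w ^ ((1 : ℝ) / (N + 1 : ℕ)))
        (Set.finite_range _).bddAbove w)
  obtain ⟨u, hu, hAu⟩ := exists_pos_vecMul_le_smul hA hr0 hcol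
  rw [Fintype.card_fin] at hAu
  exact cwRadius_le (by positivity) hu
    (T0_le_smul hAu (smul_nonneg (by positivity) fun i => (hu i).le))

/-- for a positively irreducible family of nonnegative matrices,
`r(T⁰) ≤ n · ρ(𝒜)`, where `ρ(𝒜)` is the joint spectral radius. -/
theorem cwRadius_T0_le {n p : ℕ} (hn : 0 < n) (hp : 0 < p)
    (A : Fin p → Matrix (Fin n) (Fin n) ℝ)
    (hA : ∀ a, ∀ i j, 0 ≤ A a i j)
    (hirr : PosIrredFamily A)
    (ρ : ℝ)
    (hρ : Tendsto (fun k : ℕ => ⨆ w : Fin k → Fin p,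
        (⨆ i : Fin n, ⨆ j : Fin n, |((List.ofFn fun j => A (w j)).prod) i j|) ^ ((1 : ℝ) / k))
      atTop (nhds ρ)) :
    cwRadius (T0 A) ≤ (n : ℝ) * ρ :=
  cwRadius_T0_le_general hn A hA ρ hρ
end

section
/- Let D be a closed convex subset of a Banach space and F : D → D nonexpansive with F(D) contained in a compact subset of D. Then for any x⁰ ∈ D, the Krasnoselskii–Mann sequence x^{k+1} = (x^k + F(x^k))/2 converges to a fixed point of F. -/
open Filter Topology

/-!
With `dₖ = ‖F xₖ - xₖ‖`, nonexpansiveness makes `d` nonincreasing, and induction on `n` gives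
Ishikawa's inequality `2ⁿ (dᵢ₊ₙ - dᵢ) + (1 + n/2) dᵢ ≤ ‖F xᵢ₊ₙ - xᵢ‖`. The right side is bounded
because the orbit stays bounded, so the limit of `d` must be `0`. By compactness `F xₖ` converges
along a subsequence to some `z ∈ K`; then so does `xₖ`, and `z` is a fixed point by continuity.
Finally `‖xₖ - z‖` is nonincreasing, so the whole sequence converges to `z`.
-/

theorem tendsto_zero_of_antitone_of_ishikawa_le {d : ℕ → ℝ} {M : ℝ} (hd : Antitone d)
    (hd0 : ∀ k, 0 ≤ d k) (hM : ∀ n i, 2 ^ n * (d (i + n) - d i) + (1 + n / 2) * d i ≤ M) :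
    Tendsto d atTop (𝓝 0) := by
  have hL := tendsto_atTop_ciInf hd ⟨0, Set.forall_mem_range.2 hd0⟩
  set L := ⨅ k, d k
  have hL0 : 0 ≤ L := ge_of_tendsto' hL hd0
  -- let `i → ∞` in the hypothesis: the term `2 ^ n * (d (i + n) - d i)` vanishes in the limit
  have hLM (n : ℕ) : (1 + n / 2) * L ≤ M := by
    have hlim := (((hL.comp (tendsto_add_atTop_nat n)).sub hL).const_mul ((2 : ℝ) ^ n)).add
      (hL.const_mul (1 + (n : ℝ) / 2))
    simpa using le_of_tendsto' hlim (hM n)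
  suffices L ≤ 0 by rwa [le_antisymm this hL0] at hL
  by_contra! hLpos
  obtain ⟨n, hn⟩ := exists_nat_gt (2 * M / L)
  rw [div_lt_iff₀ hLpos] at hn
  nlinarith [hLM n]

section KrasnoselskiiMann

variable {E : Type*} [NormedAddCommGroup E] [NormedSpace ℝ E] {D : Set E} {F : E → E}
  {x : ℕ → E}

theorem km_iterate_mem (hDconv : Convex ℝ D) (hFD : Set.MapsTo F D D) (hx0 : x 0 ∈ D)
    (hrec : ∀ k, x (k + 1) = (2 : ℝ)⁻¹ • (x k + F (x k))) (k : ℕ) : x k ∈ D := by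
  induction k with
  | zero => exact hx0
  | succ k ih =>
    rw [hrec k, smul_add]
    exact hDconv ih (hFD ih) (by norm_num) (by norm_num) (by norm_num)

variable (hrec : ∀ k, x (k + 1) = (2 : ℝ)⁻¹ • (x k + F (x k)))
include hrec

theorem norm_km_succ_sub (k : ℕ) : ‖x (k + 1) - x k‖ = 2⁻¹ * ‖F (x k) - x k‖ := by
  rw [hrec k, show (2 : ℝ)⁻¹ • (x k + F (x k)) - x k = (2 : ℝ)⁻¹ • (F (x k) - x k) by module,
    norm_smul]
  norm_num

theorem norm_km_le_max (R : ℝ) (hR : ∀ k, ‖F (x k)‖ ≤ R) (k : ℕ) : ‖x k‖ ≤ max ‖x 0‖ R := by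
  induction k with
  | zero => exact le_max_left _ _
  | succ k ih =>
    rw [hrec k, norm_smul]
    have := norm_add_le (x k) (F (x k))
    have := (hR k).trans (le_max_right ‖x 0‖ R)
    rw [norm_inv, Real.norm_ofNat]
    linarith

variable (hne : ∀ y ∈ D, ∀ z ∈ D, ‖F y - F z‖ ≤ ‖y - z‖) (hxD : ∀ k, x k ∈ D)
include hne hxD

theorem km_residual_antitone : Antitone fun k => ‖F (x k) - x k‖ := by
  refine antitone_nat_of_succ_le fun k => ?_
  have hsplit : F (x (k + 1)) - x (k + 1) =
      (F (x (k + 1)) - F (x k)) + (2 : ℝ)⁻¹ • (F (x k) - x k) := by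
    rw [hrec k]; module
  calc ‖F (x (k + 1)) - x (k + 1)‖
      ≤ ‖F (x (k + 1)) - F (x k)‖ + ‖(2 : ℝ)⁻¹ • (F (x k) - x k)‖ := hsplit ▸ norm_add_le _ _
    _ ≤ ‖x (k + 1) - x k‖ + 2⁻¹ * ‖F (x k) - x k‖ := by
        rw [norm_smul, norm_inv, Real.norm_ofNat]
        gcongr
        exact hne _ (hxD _) _ (hxD _)
    _ = ‖F (x k) - x k‖ := by rw [norm_km_succ_sub hrec]; ring

theorem norm_km_add_sub_le (i n : ℕ) : ‖x (i + n) - x i‖ ≤ n / 2 * ‖F (x i) - x i‖ := by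
  induction n with
  | zero => simp
  | succ n ih =>
    have hstep := norm_km_succ_sub hrec (i + n)
    have hres := km_residual_antitone hrec hne hxD (Nat.le_add_right i n)
    have := norm_sub_le_norm_sub_add_norm_sub (x (i + n + 1)) (x (i + n)) (x i)
    push_cast
    rw [← add_assoc]
    simp only at hres
    linarith

theorem km_ishikawa_ineq (n i : ℕ) :
    2 ^ n * (‖F (x (i + n)) - x (i + n)‖ - ‖F (x i) - x i‖) + (1 + n / 2) * ‖F (x i) - x i‖
      ≤ ‖F (x (i + n)) - x i‖ := by
  induction n generalizing i with
  | zero => simp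
  | succ n ih =>
    have hsplit : F (x (i + n + 1)) - x i =
        (2 : ℝ) • (F (x (i + n + 1)) - x (i + 1)) - (F (x (i + n + 1)) - F (x i)) := by
      rw [hrec i]; module
    have hrev : 2 * ‖F (x (i + n + 1)) - x (i + 1)‖ - ‖x (i + n + 1) - x i‖
        ≤ ‖F (x (i + n + 1)) - x i‖ := by
      have := norm_sub_norm_le ((2 : ℝ) • (F (x (i + n + 1)) - x (i + 1)))
        (F (x (i + n + 1)) - F (x i))
      rw [norm_smul, ← hsplit] at this
      norm_num at this
      linarith [hne _ (hxD (i + n + 1)) _ (hxD i)]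
    have hdist := norm_km_add_sub_le hrec hne hxD i (n + 1)
    have hmono : ‖F (x (i + 1)) - x (i + 1)‖ ≤ ‖F (x i) - x i‖ :=
      km_residual_antitone hrec hne hxD (Nat.le_succ i)
    -- the factor `2` from `hrev` doubles `2 ^ n`, which beats the linear loss `n + 2`
    have hpow : (n : ℝ) + 2 ≤ 2 ^ (n + 1) := by
      exact_mod_cast Nat.lt_two_pow_self (n := n + 1)
    have hgap := mul_le_mul_of_nonneg_right hpow (sub_nonneg.2 hmono)
    have := ih (i + 1)
    rw [add_right_comm] at this
    rw [← add_assoc] at hdist ⊢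
    push_cast at hdist ⊢
    rw [pow_succ] at hgap ⊢
    linarith

theorem km_residual_tendsto_zero (R : ℝ) (hR : ∀ k, ‖F (x k)‖ ≤ R) :
    Tendsto (fun k => F (x k) - x k) atTop (𝓝 0) := by
  rw [tendsto_zero_iff_norm_tendsto_zero]
  refine tendsto_zero_of_antitone_of_ishikawa_le (M := R + max ‖x 0‖ R)
    (km_residual_antitone hrec hne hxD) (fun _ => norm_nonneg _) fun n i => ?_
  calc _ ≤ ‖F (x (i + n)) - x i‖ := km_ishikawa_ineq hrec hne hxD n i
    _ ≤ ‖F (x (i + n))‖ + ‖x i‖ := norm_sub_le _ _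
    _ ≤ R + max ‖x 0‖ R := add_le_add (hR _) (norm_km_le_max hrec R hR i)

theorem km_norm_sub_fixedPoint_antitone {z : E} (hz : z ∈ D) (hFz : F z = z) :
    Antitone fun k => ‖x k - z‖ := by
  refine antitone_nat_of_succ_le fun k => ?_
  have hsplit : x (k + 1) - z = (2 : ℝ)⁻¹ • (x k - z) + (2 : ℝ)⁻¹ • (F (x k) - F z) := by
    rw [hrec k, hFz]; module
  calc ‖x (k + 1) - z‖ ≤ ‖(2 : ℝ)⁻¹ • (x k - z)‖ + ‖(2 : ℝ)⁻¹ • (F (x k) - F z)‖ :=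
        hsplit ▸ norm_add_le _ _
    _ = 2⁻¹ * ‖x k - z‖ + 2⁻¹ * ‖F (x k) - F z‖ := by simp only [norm_smul]; norm_num
    _ ≤ ‖x k - z‖ := by linarith [hne _ (hxD k) _ hz]

end KrasnoselskiiMann

theorem krasnoselskii_mann_converges_general {E : Type*} [NormedAddCommGroup E] [NormedSpace ℝ E]
    (D : Set E) (hDconv : Convex ℝ D)
    (F : E → E) (hFD : Set.MapsTo F D D)
    (hne : ∀ x ∈ D, ∀ y ∈ D, ‖F x - F y‖ ≤ ‖x - y‖)
    (K : Set E) (hK : IsCompact K) (hKD : K ⊆ D) (hFK : F '' D ⊆ K)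
    (x : ℕ → E) (hx0 : x 0 ∈ D)
    (hrec : ∀ k, x (k + 1) = (2 : ℝ)⁻¹ • (x k + F (x k))) :
    ∃ z ∈ D, F z = z ∧ Tendsto x atTop (nhds z) := by
  have hxD := km_iterate_mem hDconv hFD hx0 hrec
  have hFxK (k : ℕ) : F (x k) ∈ K := hFK ⟨x k, hxD k, rfl⟩
  obtain ⟨R, hR⟩ := hK.isBounded.exists_norm_le
  obtain ⟨z, hzK, φ, hφ, hFxφ⟩ := hK.tendsto_subseq hFxK
  have hzD := hKD hzK
  have hxφ : Tendsto (fun j => x (φ j)) atTop (𝓝 z) := by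
    simpa using hFxφ.sub
      ((km_residual_tendsto_zero hrec hne hxD R fun k => hR _ (hFxK k)).comp hφ.tendsto_atTop)
  have hFz : F z = z := by
    have hcont : ContinuousOn F D := (LipschitzOnWith.of_dist_le' (K := 1) fun y hy w hw => by
      simpa [dist_eq_norm] using hne y hy w hw).continuousOn
    refine tendsto_nhds_unique ((hcont z hzD).tendsto.comp ?_) hFxφ
    exact tendsto_nhdsWithin_iff.2 ⟨hxφ, Eventually.of_forall fun j => hxD (φ j)⟩
  refine ⟨z, hzD, hFz, ?_⟩
  rw [tendsto_iff_norm_sub_tendsto_zero, tendsto_iff_tendsto_subseq_of_antitone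
    (km_norm_sub_fixedPoint_antitone hrec hne hxD hzD hFz) hφ.tendsto_atTop]
  exact tendsto_iff_norm_sub_tendsto_zero.1 hxφ

/-- Ishikawa's theorem: let `D` be a closed convex subset of a Banach
space and `F : D → D` nonexpansive with `F(D)` contained in a compact subset of `D`.
Then for every `x⁰ ∈ D` the Krasnoselskii–Mann sequence
`x^{k+1} = (x^k + F(x^k))/2` converges to a fixed point of `F`. -/
theorem krasnoselskii_mann_converges {E : Type*} [NormedAddCommGroup E] [NormedSpace ℝ E]
    [CompleteSpace E]
    (D : Set E) (hDc : IsClosed D) (hDconv : Convex ℝ D)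
    (F : E → E) (hFD : Set.MapsTo F D D)
    (hne : ∀ x ∈ D, ∀ y ∈ D, ‖F x - F y‖ ≤ ‖x - y‖)
    (K : Set E) (hK : IsCompact K) (hKD : K ⊆ D) (hFK : F '' D ⊆ K)
    (x : ℕ → E) (hx0 : x 0 ∈ D)
    (hrec : ∀ k, x (k + 1) = (2 : ℝ)⁻¹ • (x k + F (x k))) :
    ∃ z ∈ D, F z = z ∧ Tendsto x atTop (nhds z) :=
  krasnoselskii_mann_converges_general D hDconv F hFD hne K hK hKD hFK x hx0 hrec
end

section
/- Let f : ℝ₊^N → ℝ₊^N be monotone, positively homogeneous, and have an eigenvector u with all entries positive (f(u) = λu, λ > 0). Then the projective Krasnoselskii–Mann iteration v^{k+1} = [ (f(v^k)/G[f(v^k)]) ∘ v^k ]^{1/2}, started from any positive v⁰ with ∏ᵢ v⁰ᵢ = 1, converges to an eigenvector v of f with positive entries, and G[f(v^k)] converges to the eigenvalue associated with v. -/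
/-!
In logarithmic coordinates `S y = log f (exp y)` is monotone and commutes with adding constants
("topical"), hence `1`-Lipschitz for the sup norm. Up to centring, the projective iteration is the
Krasnoselskii–Mann iteration `T y = (y + S' y) / 2` of `S' = S - log λ`, which fixes `log u`; so
orbits are bounded and have limit points. The largest coordinate of the increment `T y - y` does not
increase along an orbit, so by LaSalle's invariance principle it is a constant `c` along the orbit
of a limit point `w`. Averaging forces some coordinate to attain `c` at every step; that coordinate
moves linearly, and boundedness gives `c = 0`. Applied also to `-S' (-·)` this yields
`T yₖ - yₖ → 0`, so `w` is a fixed point, and as `T` is nonexpansive the orbit converges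
to `w`.
-/

open Filter

noncomputable def geomMean {ι : Type*} [Fintype ι] (x : ι → ℝ) : ℝ :=
  (∏ i, x i) ^ ((1 : ℝ) / (Fintype.card ι : ℝ))

open Topology Function
open scoped BigOperators

section Dynamics

variable {X : Type*}

theorem LipschitzWith.dist_iterate_le_of_isFixedPt [PseudoMetricSpace X] {T : X → X}
    (hT : LipschitzWith 1 T) {p : X} (hp : IsFixedPt T p) (x : X) (k : ℕ) :
    dist (T^[k] x) p ≤ dist x p := by
  simpa [(hp.iterate k).eq] using (hT.iterate k).dist_le_mul x p

theorem LipschitzWith.exists_tendsto_iterate_subseq [PseudoMetricSpace X] [ProperSpace X]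
    {T : X → X} (hT : LipschitzWith 1 T) {p : X} (hp : IsFixedPt T p) (x : X) :
    ∃ (w : X) (φ : ℕ → ℕ), StrictMono φ ∧
      Tendsto (fun n => T^[φ n] x) atTop (𝓝 w) := by
  obtain ⟨w, -, φ, hφ, hw⟩ := (isCompact_closedBall p (dist x p)).tendsto_subseq
    fun k => Metric.mem_closedBall.2 (hT.dist_iterate_le_of_isFixedPt hp x k)
  exact ⟨w, φ, hφ, hw⟩

theorem LipschitzWith.tendsto_iterate_of_tendsto_subseq [PseudoMetricSpace X] {T : X → X}
    (hT : LipschitzWith 1 T) {w : X} (hw : IsFixedPt T w) {x : X} {φ : ℕ → ℕ}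
    (hφ : Tendsto φ atTop atTop) (hx : Tendsto (fun n => T^[φ n] x) atTop (𝓝 w)) :
    Tendsto (fun k => T^[k] x) atTop (𝓝 w) := by
  have hanti : Antitone fun k => dist (T^[k] x) w := antitone_nat_of_succ_le fun k => by
    simpa [iterate_succ_apply', hw.eq] using hT.dist_le_mul (T^[k] x) w
  rw [tendsto_iff_dist_tendsto_zero] at hx ⊢
  exact (tendsto_iff_tendsto_subseq_of_antitone hanti hφ).2 hx

variable [TopologicalSpace X] {T : X → X} {g : X → ℝ} {x w : X} {φ : ℕ → ℕ}

theorem tendsto_comp_iterate_of_comp_le (hg : Continuous g) (hgT : ∀ y, g (T y) ≤ g y)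
    (hφ : Tendsto φ atTop atTop) (hx : Tendsto (fun n => T^[φ n] x) atTop (𝓝 w)) :
    Tendsto (fun k => g (T^[k] x)) atTop (𝓝 (g w)) := by
  have hanti : Antitone fun k => g (T^[k] x) := antitone_nat_of_succ_le fun k => by
    simpa only [iterate_succ_apply'] using hgT _
  exact (tendsto_iff_tendsto_subseq_of_antitone hanti hφ).2 ((hg.tendsto w).comp hx)

/-- LaSalle's invariance principle. -/
theorem comp_iterate_eq_of_comp_le (hT : Continuous T) (hg : Continuous g)
    (hgT : ∀ y, g (T y) ≤ g y) (hφ : Tendsto φ atTop atTop)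
    (hx : Tendsto (fun n => T^[φ n] x) atTop (𝓝 w)) (j : ℕ) :
    g (T^[j] w) = g w := by
  have hlim : Tendsto (fun n => g (T^[j] (T^[φ n] x))) atTop (𝓝 (g (T^[j] w))) :=
    ((hg.comp (hT.iterate j)).tendsto w).comp hx
  simp only [← iterate_add_apply] at hlim
  exact tendsto_nhds_unique hlim <| (tendsto_comp_iterate_of_comp_le hg hgT hφ hx).comp <|
    tendsto_atTop_mono (fun n => Nat.le_add_left _ j) hφ

end Dynamics

theorem Set.nonempty_iInter_of_antitone_of_finite {ι : Type*} [Finite ι] {s : ℕ → Set ι}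
    (hs : Antitone s) (hne : ∀ j, (s j).Nonempty) : (⋂ j, s j).Nonempty := by
  choose g hg using hne
  obtain ⟨i, hi⟩ := Finite.exists_infinite_fiber g
  refine ⟨i, Set.mem_iInter.2 fun j => ?_⟩
  obtain ⟨j', hj'i, hjj'⟩ := (Set.infinite_coe_iff.mp hi).exists_gt j
  exact hs hjj'.le (hj'i ▸ hg j')

section Topical

variable {ι : Type*}

structure IsTopical (S : (ι → ℝ) → ι → ℝ) : Prop where
  monotone : Monotone S
  map_add_const : ∀ x (c : ℝ), S (x + const ι c) = S x + const ι c

noncomputable def kmStep (S : (ι → ℝ) → ι → ℝ) (x : ι → ℝ) : ι → ℝ :=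
  (2 : ℝ)⁻¹ • (x + S x)

@[simp]
theorem kmStep_apply (S : (ι → ℝ) → ι → ℝ) (x : ι → ℝ) (i : ι) :
    kmStep S x i = (x i + S x i) / 2 := by
  simp [kmStep]; ring

theorem isFixedPt_kmStep_iff {S : (ι → ℝ) → ι → ℝ} {x : ι → ℝ} :
    IsFixedPt (kmStep S) x ↔ IsFixedPt S x := by
  simp only [IsFixedPt, funext_iff, kmStep_apply]
  exact forall_congr' fun i => by constructor <;> intro h <;> linarith

namespace IsTopical

variable {S : (ι → ℝ) → ι → ℝ}

theorem le_add_const (hS : IsTopical S) {x y : ι → ℝ} {c : ℝ} (h : x ≤ y + const ι c) :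
    S x ≤ S y + const ι c :=
  hS.map_add_const y c ▸ hS.monotone h

theorem lipschitzWith [Fintype ι] (hS : IsTopical S) : LipschitzWith 1 S := by
  have key : ∀ x y : ι → ℝ, S x ≤ S y + const ι (dist x y) := fun x y =>
    hS.le_add_const fun i => by
      have := (le_abs_self _).trans (Real.dist_eq (x i) (y i) ▸ dist_le_pi_dist x y i)
      simp only [Pi.add_apply, const_apply]
      linarith
  refine LipschitzWith.of_dist_le_mul fun x y => ?_
  rw [NNReal.coe_one, one_mul, dist_pi_le_iff dist_nonneg]
  intro i
  have h₁ := key x y i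
  have h₂ := key y x i
  simp only [Pi.add_apply, const_apply, dist_comm y x] at h₁ h₂
  rw [Real.dist_eq, abs_sub_le_iff]
  constructor <;> linarith

protected theorem kmStep (hS : IsTopical S) : IsTopical (kmStep S) where
  monotone x y h i := by
    have := hS.monotone h i
    simp only [kmStep_apply]
    linarith [h i]
  map_add_const x c := by
    ext i
    have := congrFun (hS.map_add_const x c) i
    simp only [kmStep_apply, Pi.add_apply, const_apply] at this ⊢
    rw [this]; ring

theorem negConj (hS : IsTopical S) : IsTopical fun x => -S (-x) where
  monotone x y h := neg_le_neg (hS.monotone (neg_le_neg h))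
  map_add_const x c := by
    have hneg : -(x + const ι c) = -x + const ι (-c) := by ext; simp [add_comm]
    rw [hneg, hS.map_add_const, neg_add]
    ext; simp

theorem kmStep_kmStep_sub_le (hS : IsTopical S) {x : ι → ℝ} {c : ℝ}
    (h : kmStep S x - x ≤ const ι c) :
    kmStep S (kmStep S x) - kmStep S x ≤ (2 : ℝ)⁻¹ • (kmStep S x - x + const ι c) := by
  intro i
  have hle := hS.le_add_const (x := kmStep S x) (y := x) (c := c)
    (fun j => by have := h j; simp only [Pi.sub_apply, Pi.add_apply] at this ⊢; linarith) i
  simp only [Pi.sub_apply, Pi.add_apply, Pi.smul_apply, smul_eq_mul, kmStep_apply,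
    const_apply] at hle ⊢
  linarith

end IsTopical

end Topical

section Increments

variable {ι : Type*} [Fintype ι] [Nonempty ι]

theorem eq_zero_of_iSup_sub_eq {x : ℕ → ι → ℝ} {c : ℝ}
    (hbdd : Bornology.IsBounded (Set.range x))
    (hstep : ∀ j, x (j + 2) - x (j + 1) ≤ (2 : ℝ)⁻¹ • (x (j + 1) - x j + const ι c))
    (hsup : ∀ j, ⨆ i, (x (j + 1) - x j) i = c) : c = 0 := by
  have hle : ∀ j i, x (j + 1) i - x j i ≤ c := fun j i =>
    hsup j ▸ le_ciSup (f := x (j + 1) - x j) (Finite.bddAbove_range _) i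
  -- by averaging, an increment can only reach the maximum `c` if the previous one did
  have hanti : Antitone fun j => {i | x (j + 1) i - x j i = c} :=
    antitone_nat_of_succ_le fun j i (hi : _ = c) => by
      have := hstep j i
      simp only [Pi.sub_apply, Pi.add_apply, Pi.smul_apply, smul_eq_mul, const_apply] at this
      exact le_antisymm (hle j i) (by linarith)
  obtain ⟨i, hi⟩ := Set.nonempty_iInter_of_antitone_of_finite hanti fun j =>
    exists_eq_ciSup_of_finite.imp fun i h => h.trans (hsup j)
  have hlin : ∀ j : ℕ, x j i - x 0 i = j * c := by
    intro j
    induction j with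
    | zero => simp
    | succ j ih =>
      have : x (j + 1) i - x j i = c := Set.mem_iInter.1 hi j
      push_cast
      linarith
  obtain ⟨C, hC⟩ := hbdd.exists_norm_le
  have hbound : ∀ j : ℕ, j * |c| ≤ 2 * C := fun j => by
    have h₁ := (norm_le_pi_norm (x j) i).trans (hC _ ⟨j, rfl⟩)
    have h₂ := (norm_le_pi_norm (x 0) i).trans (hC _ ⟨0, rfl⟩)
    rw [Real.norm_eq_abs] at h₁ h₂
    calc (j : ℝ) * |c| = |x j i - x 0 i| := by rw [hlin, abs_mul, Nat.abs_cast]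
      _ ≤ 2 * C := by linarith [abs_sub (x j i) (x 0 i)]
  by_contra hc
  obtain ⟨n, hn⟩ := exists_nat_gt (2 * C / |c|)
  rw [div_lt_iff₀ (abs_pos.2 hc)] at hn
  linarith [hbound n]

end Increments

namespace IsTopical

variable {ι : Type*} [Fintype ι] [Nonempty ι] {S : (ι → ℝ) → ι → ℝ}

theorem iSup_kmStep_kmStep_sub_le (hS : IsTopical S) (x : ι → ℝ) :
    ⨆ i, (kmStep S (kmStep S x) - kmStep S x) i ≤ ⨆ i, (kmStep S x - x) i := by
  set M := ⨆ i, (kmStep S x - x) i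
  have hle : ∀ i, (kmStep S x - x) i ≤ M := le_ciSup (Finite.bddAbove_range _)
  refine ciSup_le fun i => (hS.kmStep_kmStep_sub_le (c := M) hle i).trans ?_
  rw [Pi.smul_apply, Pi.add_apply, const_apply, smul_eq_mul]
  linarith [hle i]

theorem tendsto_iSup_kmStep_iterate_sub (hS : IsTopical S) {p : ι → ℝ} (hp : IsFixedPt S p)
    (x : ι → ℝ) :
    Tendsto (fun k => ⨆ i, (kmStep S ((kmStep S)^[k] x) - (kmStep S)^[k] x) i) atTop
      (𝓝 0) := by
  set T := kmStep S
  have hT : LipschitzWith 1 T := hS.kmStep.lipschitzWith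
  have hTp : IsFixedPt T p := isFixedPt_kmStep_iff.2 hp
  set g : (ι → ℝ) → ℝ := fun y => ⨆ i, (T y - y) i
  have hg : Continuous g := by
    simp only [g, ← Finset.sup'_univ_eq_ciSup]
    exact Continuous.finset_sup'_apply _ fun i _ =>
      ((continuous_apply i).comp hT.continuous).sub (continuous_apply i)
  have hgT : ∀ y, g (T y) ≤ g y := hS.iSup_kmStep_kmStep_sub_le
  obtain ⟨w, φ, hφ, hw⟩ := hT.exists_tendsto_iterate_subseq hTp x
  have hconst := comp_iterate_eq_of_comp_le hT.continuous hg hgT hφ.tendsto_atTop hw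
  have hgw : g w = 0 := by
    refine eq_zero_of_iSup_sub_eq (x := fun j => T^[j] w) ?_ (fun j => ?_) (fun j => ?_)
    · exact Metric.isBounded_closedBall.subset <| Set.range_subset_iff.2 fun k =>
        Metric.mem_closedBall.2 (hT.dist_iterate_le_of_isFixedPt hTp w k)
    · simp only [iterate_succ_apply']
      refine hconst j ▸ hS.kmStep_kmStep_sub_le fun i => ?_
      exact le_ciSup (f := T (T^[j] w) - T^[j] w) (Finite.bddAbove_range _) i
    · simpa only [iterate_succ_apply'] using hconst j
  rw [← hgw]
  exact tendsto_comp_iterate_of_comp_le hg hgT hφ.tendsto_atTop hw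

theorem tendsto_kmStep_iterate_sub (hS : IsTopical S) {p : ι → ℝ} (hp : IsFixedPt S p)
    (x : ι → ℝ) :
    Tendsto (fun k => kmStep S ((kmStep S)^[k] x) - (kmStep S)^[k] x) atTop (𝓝 0) := by
  set S' : (ι → ℝ) → ι → ℝ := fun x => -S (-x)
  have hsemi : Semiconj Neg.neg (kmStep S) (kmStep S') := fun x => by
    ext i; simp only [S', kmStep_apply, Pi.neg_apply, neg_neg]; ring
  have hneg : ∀ k, kmStep S' ((kmStep S')^[k] (-x)) - (kmStep S')^[k] (-x)
      = -(kmStep S ((kmStep S)^[k] x) - (kmStep S)^[k] x) := fun k => by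
    rw [← (hsemi.iterate_right k) x, ← hsemi, neg_sub_neg, neg_sub]
  have hup := hS.tendsto_iSup_kmStep_iterate_sub hp x
  have hlo : Tendsto (fun k => ⨆ i, (kmStep S' ((kmStep S')^[k] (-x))
      - (kmStep S')^[k] (-x)) i) atTop (𝓝 0) :=
    hS.negConj.tendsto_iSup_kmStep_iterate_sub (p := -p) (by simp [IsFixedPt, hp.eq]) (-x)
  simp only [hneg] at hlo
  refine tendsto_pi_nhds.2 fun i => ?_
  refine tendsto_of_tendsto_of_tendsto_of_le_of_le
    (by simpa only [neg_zero, Pi.zero_apply] using hlo.neg) hup (fun k => ?_)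
    (fun k => le_ciSup (Finite.bddAbove_range _) i)
  exact neg_le.1 (le_ciSup (f := -(kmStep S ((kmStep S)^[k] x) - (kmStep S)^[k] x))
    (Finite.bddAbove_range _) i)

theorem exists_tendsto_kmStep_iterate (hS : IsTopical S) {p : ι → ℝ} (hp : IsFixedPt S p)
    (x : ι → ℝ) :
    ∃ w, IsFixedPt S w ∧ Tendsto (fun k => (kmStep S)^[k] x) atTop (𝓝 w) := by
  set T := kmStep S
  have hT : LipschitzWith 1 T := hS.kmStep.lipschitzWith
  obtain ⟨w, φ, hφ, hw⟩ := hT.exists_tendsto_iterate_subseq (isFixedPt_kmStep_iff.2 hp) x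
  have hTw : IsFixedPt T w := by
    have hreg := (hS.tendsto_kmStep_iterate_sub hp x).comp hφ.tendsto_atTop
    refine tendsto_nhds_unique ((hT.continuous.tendsto w).comp hw) ?_
    have := (hw.add hreg).congr fun n => add_sub_cancel _ _
    rwa [add_zero] at this
  exact ⟨w, isFixedPt_kmStep_iff.1 hTw, hT.tendsto_iterate_of_tendsto_subseq hTw
    hφ.tendsto_atTop hw⟩

end IsTopical

section Centered

variable {ι : Type*} [Fintype ι]

/-- `centered ∘ S` is the map `Ŝ` of the projective iteration. -/
noncomputable def centered (x : ι → ℝ) : ι → ℝ := x - const ι (𝔼 i, x i)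

@[simp]
theorem centered_apply (x : ι → ℝ) (i : ι) : centered x i = x i - 𝔼 j, x j := rfl

theorem continuous_expect : Continuous fun x : ι → ℝ => 𝔼 i, x i := by
  simp only [Fintype.expect_eq_sum_div_card]
  fun_prop

theorem continuous_centered : Continuous (centered : (ι → ℝ) → ι → ℝ) := by
  show Continuous fun x : ι → ℝ => x - const ι (𝔼 i, x i)
  exact continuous_id.sub (continuous_pi fun _ => continuous_expect)

theorem centered_eq_self {x : ι → ℝ} (hx : 𝔼 i, x i = 0) : centered x = x := by
  ext i; simp [hx]

variable [Nonempty ι]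

theorem expect_centered (x : ι → ℝ) : 𝔼 i, centered x i = 0 := by
  simp [Finset.expect_sub_distrib]

theorem centered_add_const (x : ι → ℝ) (c : ℝ) : centered (x + const ι c) = centered x := by
  ext i; simp [Finset.expect_add_distrib]

end Centered

namespace IsTopical

variable {ι : Type*} {S : (ι → ℝ) → ι → ℝ}

theorem map_sub_const (hS : IsTopical S) (x : ι → ℝ) (c : ℝ) :
    S (x - const ι c) = S x - const ι c := by
  have h : x - const ι c = x + const ι (-c) := by ext; simp [sub_eq_add_neg]
  rw [h, hS.map_add_const]
  ext; simp [sub_eq_add_neg]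

theorem add_const (hS : IsTopical S) (c : ℝ) : IsTopical fun x => S x + const ι c where
  monotone x y h := add_le_add_left (hS.monotone h) _
  map_add_const x d := by rw [hS.map_add_const, add_right_comm]

variable [Fintype ι] [Nonempty ι]

theorem centered_kmStep (hS : IsTopical S) (x : ι → ℝ) :
    centered (kmStep S x) = kmStep (centered ∘ S) (centered x) := by
  ext i
  have hmean : 𝔼 j, kmStep S x j = ((𝔼 j, x j) + 𝔼 j, S x j) / 2 := by
    simp only [kmStep_apply, ← Finset.expect_div, Finset.expect_add_distrib]
  have hSc : S (centered x) = S x - const ι (𝔼 j, x j) := hS.map_sub_const _ _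
  rw [centered_apply, hmean]
  simp only [kmStep_apply, comp_apply, hSc, centered_apply, Pi.sub_apply, const_apply,
    Finset.expect_sub_distrib, Fintype.expect_const]
  ring

theorem exists_tendsto_kmStep_centered_iterate (hS : IsTopical S) {p : ι → ℝ} {μ : ℝ}
    (hp : S p = p + const ι μ) {y : ι → ℝ} (hy : 𝔼 i, y i = 0) :
    ∃ w, S w = w + const ι μ ∧ 𝔼 i, w i = 0 ∧
      Tendsto (fun k => (kmStep (centered ∘ S))^[k] y) atTop (𝓝 w) := by
  set S' : (ι → ℝ) → ι → ℝ := fun x => S x + const ι (-μ)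
  have hS' : IsTopical S' := hS.add_const (-μ)
  have hp' : IsFixedPt S' p := by ext i; simp [S', hp]
  obtain ⟨w, hw, hlim⟩ := hS'.exists_tendsto_kmStep_iterate hp' y
  have hcS : centered ∘ S' = centered ∘ S := funext fun x => centered_add_const _ _
  have hsemi : Semiconj centered (kmStep S') (kmStep (centered ∘ S')) := hS'.centered_kmStep
  have hiter : ∀ k, (kmStep (centered ∘ S))^[k] y = centered ((kmStep S')^[k] y) := fun k => by
    rw [← hcS, hsemi.iterate_right k y, centered_eq_self hy]
  refine ⟨centered w, ?_, expect_centered w, ?_⟩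
  · have hSw : S w = w + const ι μ := by
      ext i; have := congrFun hw.eq i; simp only [S', Pi.add_apply, const_apply] at this ⊢
      linarith
    rw [centered, hS.map_sub_const, hSw]
    ext i; simp only [Pi.add_apply, Pi.sub_apply, const_apply]; ring
  · simp only [hiter]
    exact (continuous_centered.tendsto w).comp hlim

end IsTopical

section LogConj

open Real

variable {ι : Type*} {f : (ι → ℝ) → ι → ℝ}

noncomputable def logConj (f : (ι → ℝ) → ι → ℝ) (y : ι → ℝ) : ι → ℝ :=
  fun i => log (f (fun j => exp (y j)) i)

theorem apply_pos_of_pos_eigenvector [Fintype ι] [Nonempty ι]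
    (hmono : ∀ x y : ι → ℝ, 0 ≤ x → x ≤ y → f x ≤ f y)
    (hhom : ∀ t : ℝ, 0 < t → ∀ x : ι → ℝ, 0 ≤ x → f (t • x) = t • f x)
    {u : ι → ℝ} (hu : ∀ i, 0 < u i) {lam : ℝ} (hlam : 0 < lam) (heig : f u = lam • u)
    {x : ι → ℝ} (hx : ∀ i, 0 < x i) (i : ι) : 0 < f x i := by
  set t := ⨅ j, x j / u j
  have ht : 0 < t := by
    obtain ⟨j, hj⟩ := exists_eq_ciInf_of_finite (f := fun j => x j / u j)
    exact (div_pos (hx j) (hu j)).trans_eq hj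
  have htu : t • u ≤ x := fun j =>
    (le_div_iff₀ (hu j)).1 (ciInf_le (Finite.bddBelow_range (fun j => x j / u j)) j)
  calc 0 < t * (lam * u i) := mul_pos ht (mul_pos hlam (hu i))
    _ = f (t • u) i := by rw [hhom t ht u fun j => (hu j).le, heig]; simp
    _ ≤ f x i := hmono _ x (fun j => by simpa using (mul_pos ht (hu j)).le) htu i

theorem exp_logConj (hfpos : ∀ x : ι → ℝ, (∀ i, 0 < x i) → ∀ i, 0 < f x i)
    (y : ι → ℝ) (i : ι) : exp (logConj f y i) = f (fun j => exp (y j)) i :=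
  exp_log (hfpos _ (fun _ => exp_pos _) i)

theorem isTopical_logConj (hfpos : ∀ x : ι → ℝ, (∀ i, 0 < x i) → ∀ i, 0 < f x i)
    (hmono : ∀ x y : ι → ℝ, 0 ≤ x → x ≤ y → f x ≤ f y)
    (hhom : ∀ t : ℝ, 0 < t → ∀ x : ι → ℝ, 0 ≤ x → f (t • x) = t • f x) :
    IsTopical (logConj f) where
  monotone y z h i := log_le_log (hfpos _ (fun _ => exp_pos _) i)
    (hmono _ _ (fun _ => (exp_pos _).le) (fun j => exp_le_exp.2 (h j)) i)
  map_add_const y c := by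
    have h : (fun j => exp ((y + const ι c) j)) = exp c • fun j => exp (y j) := by
      ext j; simp [exp_add, mul_comm]
    ext i
    change log (f (fun j => exp ((y + const ι c) j)) i) = log (f (fun j => exp (y j)) i) + c
    rw [h, hhom _ (exp_pos c) _ fun _ => (exp_pos _).le, Pi.smul_apply, smul_eq_mul,
      log_mul (exp_pos c).ne' (hfpos _ (fun _ => exp_pos _) i).ne', log_exp, add_comm]

theorem logConj_log_eq {u : ι → ℝ} (hu : ∀ i, 0 < u i) {lam : ℝ} (hlam : 0 < lam)
    (heig : f u = lam • u) :
    logConj f (fun i => log (u i)) = (fun i => log (u i)) + const ι (log lam) := by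
  ext i
  simp only [logConj, exp_log (hu _), heig, Pi.smul_apply, smul_eq_mul, Pi.add_apply,
    const_apply]
  rw [log_mul hlam.ne' (hu i).ne', add_comm]

theorem geomMean_exp [Fintype ι] (a : ι → ℝ) :
    geomMean (fun i => exp (a i)) = exp (𝔼 i, a i) := by
  rw [geomMean, ← exp_sum, ← exp_mul, Fintype.expect_eq_sum_div_card, mul_one_div]

theorem geomMean_apply_exp [Fintype ι]
    (hfpos : ∀ x : ι → ℝ, (∀ i, 0 < x i) → ∀ i, 0 < f x i) (y : ι → ℝ) :
    geomMean (f (fun j => exp (y j))) = exp (𝔼 i, logConj f y i) := by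
  rw [← geomMean_exp]
  congr 1
  ext j
  exact (exp_logConj hfpos y j).symm

theorem sqrt_div_geomMean_mul_exp [Fintype ι] [Nonempty ι]
    (hfpos : ∀ x : ι → ℝ, (∀ i, 0 < x i) → ∀ i, 0 < f x i) (y : ι → ℝ) (i : ι) :
    √(f (fun j => exp (y j)) i / geomMean (f (fun j => exp (y j))) * exp (y i))
      = exp (kmStep (centered ∘ logConj f) y i) := by
  rw [geomMean_apply_exp hfpos, ← exp_logConj hfpos, ← exp_sub, ← exp_add, ← exp_half]
  simp only [kmStep_apply, comp_apply, centered_apply]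
  ring_nf

theorem eq_exp_kmStep_iterate [Fintype ι] [Nonempty ι]
    (hfpos : ∀ x : ι → ℝ, (∀ i, 0 < x i) → ∀ i, 0 < f x i) {v : ℕ → ι → ℝ}
    (hv0pos : ∀ i, 0 < v 0 i)
    (hrec : ∀ k i, v (k + 1) i = √(f (v k) i / geomMean (f (v k)) * v k i)) (k : ℕ) :
    v k = fun i => exp ((kmStep (centered ∘ logConj f))^[k] (fun j => log (v 0 j)) i) := by
  induction k with
  | zero => ext i; simp [exp_log (hv0pos i)]
  | succ k ih =>
    ext i
    rw [hrec, ih, sqrt_div_geomMean_mul_exp hfpos, iterate_succ_apply']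

end LogConj

theorem projective_krasnoselskii_mann_converges_general {ι : Type*} [Fintype ι] [Nonempty ι]
    (f : (ι → ℝ) → (ι → ℝ))
    (hmono : ∀ x y : ι → ℝ, 0 ≤ x → x ≤ y → f x ≤ f y)
    (hhom : ∀ t : ℝ, 0 < t → ∀ x : ι → ℝ, 0 ≤ x → f (t • x) = t • f x)
    (u : ι → ℝ) (hu : ∀ i, 0 < u i) (lam : ℝ) (hlam : 0 < lam) (heig : f u = lam • u)
    (v : ℕ → ι → ℝ) (hv0pos : ∀ i, 0 < v 0 i) (hv0 : ∏ i, v 0 i = 1)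
    (hrec : ∀ k i, v (k + 1) i = Real.sqrt ((f (v k) i / geomMean (f (v k))) * v k i)) :
    ∃ w : ι → ℝ, (∀ i, 0 < w i) ∧ ∃ μ : ℝ, 0 < μ ∧ f w = μ • w ∧
      Tendsto v atTop (nhds w) ∧
      Tendsto (fun k => geomMean (f (v k))) atTop (nhds μ) := by
  have hfpos (x : ι → ℝ) (hx : ∀ i, 0 < x i) (i : ι) : 0 < f x i :=
    apply_pos_of_pos_eigenvector hmono hhom hu hlam heig hx i
  have hS := isTopical_logConj hfpos hmono hhom
  have hv := funext (eq_exp_kmStep_iterate hfpos hv0pos hrec)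
  have hy0 : 𝔼 i, Real.log (v 0 i) = 0 := by
    rw [Fintype.expect_eq_sum_div_card, ← Real.log_prod fun i _ => (hv0pos i).ne', hv0,
      Real.log_one, zero_div]
  obtain ⟨w, hw, hwmean, hlim⟩ :=
    hS.exists_tendsto_kmStep_centered_iterate (logConj_log_eq hu hlam heig) hy0
  refine ⟨fun i => Real.exp (w i), fun i => Real.exp_pos _, lam, hlam, ?_, ?_, ?_⟩
  · ext i
    rw [← exp_logConj hfpos, hw]
    simp [Real.exp_add, Real.exp_log hlam, mul_comm]
  · rw [hv]
    exact ((continuous_pi fun i => (continuous_apply i).rexp).tendsto w).comp hlim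
  · have hμ : Real.exp (𝔼 i, logConj f w i) = lam := by
      simp [hw, Finset.expect_add_distrib, hwmean, Real.exp_log hlam]
    rw [hv]
    simp only [geomMean_apply_exp hfpos]
    exact hμ ▸ ((continuous_expect.comp hS.lipschitzWith.continuous).rexp.tendsto w).comp hlim

/-- let `f : ℝ₊^N → ℝ₊^N` be monotone, positively homogeneous, with a
positive eigenvector.  Then the projective Krasnoselskii–Mann iteration
`v^{k+1} = [(f(v^k)/G[f(v^k)]) ∘ v^k]^{1/2}`, started from any positive `v⁰` with
`∏ᵢ v⁰ᵢ = 1`, converges to a positive eigenvector `v` of `f`, and `G[f(v^k)]`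
converges to the associated eigenvalue. -/
theorem projective_krasnoselskii_mann_converges {ι : Type*} [Fintype ι] [Nonempty ι]
    (f : (ι → ℝ) → (ι → ℝ))
    (hpos : ∀ x : ι → ℝ, 0 ≤ x → 0 ≤ f x)
    (hmono : ∀ x y : ι → ℝ, 0 ≤ x → x ≤ y → f x ≤ f y)
    (hhom : ∀ t : ℝ, 0 < t → ∀ x : ι → ℝ, 0 ≤ x → f (t • x) = t • f x)
    (u : ι → ℝ) (hu : ∀ i, 0 < u i) (lam : ℝ) (hlam : 0 < lam) (heig : f u = lam • u)
    (v : ℕ → ι → ℝ) (hv0pos : ∀ i, 0 < v 0 i) (hv0 : ∏ i, v 0 i = 1)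
    (hrec : ∀ k i, v (k + 1) i = Real.sqrt ((f (v k) i / geomMean (f (v k))) * v k i)) :
    ∃ w : ι → ℝ, (∀ i, 0 < w i) ∧ ∃ μ : ℝ, 0 < μ ∧ f w = μ • w ∧
      Tendsto v atTop (nhds w) ∧
      Tendsto (fun k => geomMean (f (v k))) atTop (nhds μ) :=
  projective_krasnoselskii_mann_converges_general f hmono hhom u hu lam hlam heig v hv0pos hv0 hrec
end

section
/- Under the assumptions of the projective Krasnoselskii–Mann convergence theorem (f monotone, positively homogeneous on ℝ₊^N with positive eigenvector u), the iterates satisfy the asymptotic regularity bound d_H(f(v^k), v^k) ≤ (4/√(πk)) · d_H(v⁰, u), where d_H is Hilbert's projective metric. -/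
/-
In the Hilbert metric a monotone homogeneous map with a positive eigenvector is nonexpansive, and
in logarithmic coordinates the iteration is the Krasnoselskii–Mann step `v ↦ (f v + v) / 2`, up to
an additive constant that `d_H` does not see. For `a m n = d(vᵐ, f vⁿ)` and `b m n = d(vᵐ, vⁿ)`
the triangle inequality gives the averaging recursions of Baillon and Bruck, with boundary values
`a 0 n ≤ 2 d_H(v⁰, u)` and `b m m = 0`. Their solution is a survival probability of the simple
random walk; on the diagonal it is `(C(2n, n) + C(2n, n + 1)) / 4ⁿ ≤ 2 / √(πn)` by Wallis'
inequality.
-/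

/-- Hopf's oscillation seminorm `‖z‖_H = max_i z_i − min_i z_i`. -/
noncomputable def hopfOsc {ι : Type*} [Fintype ι] (z : ι → ℝ) : ℝ :=
  (⨆ i, z i) - ⨅ i, z i

/-- Hilbert's projective metric `d_H(x, y) = ‖log x − log y‖_H`. -/
noncomputable def dHilbert {ι : Type*} [Fintype ι] (x y : ι → ℝ) : ℝ :=
  hopfOsc fun i => Real.log (x i) - Real.log (y i)

open Real Finset

theorem Nat.centralBinom_le_four_pow_div_sqrt {n : ℕ} (hn : n ≠ 0) :
    (n.centralBinom : ℝ) ≤ 4 ^ n / √(π * n) := by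
  have hfact : ((2 * n).factorial : ℝ) = n.centralBinom * n.factorial * n.factorial := by
    have := Nat.choose_mul_factorial_mul_factorial (n := 2 * n) (k := n) (by omega)
    rw [show 2 * n - n = n by omega] at this
    rw [Nat.centralBinom_eq_two_mul_choose]
    exact_mod_cast this.symm
  have hcpos : (0 : ℝ) < n.centralBinom := mod_cast n.centralBinom_pos
  have hWallis := Real.Wallis.le_W n
  rw [Real.Wallis.W_eq_factorial_ratio, hfact] at hWallis
  field_simp at hWallis
  have hsq : (n.centralBinom : ℝ) ^ 2 * (π * n) ≤ (4 ^ n) ^ 2 := by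
    rw [show ((4 : ℝ) ^ n) ^ 2 = 2 ^ (4 * n) by
      rw [pow_mul, ← pow_mul, mul_comm, pow_mul]; norm_num]
    refine le_of_mul_le_mul_left ?_ (by positivity : (0 : ℝ) < 4 * (n + 1))
    nlinarith [show 0 ≤ (n.centralBinom : ℝ) ^ 2 * π by positivity]
  rw [le_div_iff₀ (by positivity), ← sqrt_sq hcpos.le, ← sqrt_mul (by positivity),
    sqrt_le_left (by positivity)]
  exact hsq

/-- The probability that the simple random walk started at `c` does not hit `0` within `t` steps. -/
noncomputable def survivalProb : ℕ → ℕ → ℝ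
  | 0, _ => 0
  | _ + 1, 0 => 1
  | c + 1, t + 1 => (survivalProb (c + 2) t + survivalProb c t) / 2

theorem survivalProb_eq_one_of_lt {c t : ℕ} (h : t < c) : survivalProb c t = 1 := by
  induction t generalizing c with
  | zero =>
    obtain ⟨c, rfl⟩ := Nat.exists_eq_add_one_of_ne_zero (by omega : c ≠ 0)
    rw [survivalProb]
  | succ t ih =>
    obtain ⟨c, rfl⟩ := Nat.exists_eq_add_one_of_ne_zero (by omega : c ≠ 0)
    rw [survivalProb, ih (by omega), ih (by omega)]
    norm_num

theorem Nat.choose_div_two_eq_choose_succ_div_two (t : ℕ) :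
    t.choose (t / 2) = t.choose ((t + 1) / 2) := by
  obtain ⟨m, rfl | rfl⟩ := Nat.even_or_odd' t
  · congr 1; omega
  · rw [show (2 * m + 1) / 2 = m by omega, show (2 * m + 1 + 1) / 2 = m + 1 by omega,
      Nat.choose_symm_half]

theorem Nat.sum_range_choose_succ_div_two (t c : ℕ) :
    ∑ i ∈ range (c + 1), (t + 1).choose ((t + 1 + i + 1) / 2) =
      ∑ i ∈ range (c + 2), t.choose ((t + i + 1) / 2) +
        ∑ i ∈ range c, t.choose ((t + i + 1) / 2) := by
  have pascal (i : ℕ) : (t + 1).choose ((t + 1 + i + 1) / 2) =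
      t.choose ((t + i) / 2) + t.choose ((t + i + 2) / 2) := by
    rw [show (t + 1 + i + 1) / 2 = (t + i) / 2 + 1 by omega, Nat.choose_succ_succ',
      show (t + i) / 2 + 1 = (t + i + 2) / 2 by omega]
  induction c with
  | zero =>
    simp only [sum_range_succ, sum_range_zero, zero_add, add_zero, pascal,
      Nat.choose_div_two_eq_choose_succ_div_two]
  | succ c ih =>
    rw [sum_range_succ, ih, pascal, sum_range_succ _ (c + 2), sum_range_succ _ c,
      show t + (c + 2) + 1 = t + (c + 1) + 2 by omega, show t + c + 1 = t + (c + 1) by omega]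
    ring

/-- Reflection principle: the walk from `0` survives iff it ends in `(-c, c]`, and the `i`-th
summand is the weight of whichever of the levels `i + 1`, `-i` has the parity of `t`. -/
theorem survivalProb_eq (c t : ℕ) :
    survivalProb c t = (∑ i ∈ range c, (t.choose ((t + i + 1) / 2) : ℝ)) / 2 ^ t := by
  induction t generalizing c with
  | zero =>
    cases c with
    | zero => simp [survivalProb]
    | succ c =>
      rw [survivalProb_eq_one_of_lt (by omega), sum_range_succ',
        sum_eq_zero fun i _ => by rw [Nat.choose_eq_zero_of_lt (by omega), Nat.cast_zero]]
      simp
  | succ t ih =>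
    cases c with
    | zero => simp [survivalProb]
    | succ c =>
      rw [survivalProb, ih, ih, ← Nat.cast_sum, ← Nat.cast_sum, ← Nat.cast_sum,
        Nat.sum_range_choose_succ_div_two, pow_succ]
      push_cast
      ring

theorem survivalProb_two_le {n : ℕ} (hn : n ≠ 0) : survivalProb 2 (2 * n) ≤ 2 / √(π * n) := by
  have h4 : (2 : ℝ) ^ (2 * n) = 4 ^ n := by rw [pow_mul]; norm_num
  rw [survivalProb_eq, sum_range_succ, sum_range_one, h4, div_le_iff₀ (by positivity)]
  have hle (r : ℕ) : ((2 * n).choose r : ℝ) ≤ n.centralBinom :=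
    mod_cast Nat.choose_le_centralBinom r n
  calc _ ≤ 2 * (n.centralBinom : ℝ) := by
        linarith [hle ((2 * n + 0 + 1) / 2), hle ((2 * n + 1 + 1) / 2)]
    _ ≤ 2 * (4 ^ n / √(π * n)) := by gcongr; exact Nat.centralBinom_le_four_pow_div_sqrt hn
    _ = 2 / √(π * n) * 4 ^ n := by ring

/-- `D * survivalProb` solves these recursions with equality: they are the one-step analysis of a
random walk on the gap `n - m`. -/
theorem le_mul_survivalProb_of_averaging {a b : ℕ → ℕ → ℝ} {D : ℝ} (ha : ∀ n, a 0 n ≤ D)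
    (hb : ∀ m, b m m ≤ 0) (hb_succ : ∀ m n, m ≤ n → b m (n + 1) ≤ (a m n + b m n) / 2)
    (ha_succ : ∀ m n, m < n → a (m + 1) n ≤ (a m n + b m n) / 2) {m n : ℕ} (hmn : m ≤ n) :
    a m n ≤ D * survivalProb (n - m + 2) (n + m) ∧ b m n ≤ D * survivalProb (n - m) (n + m) := by
  induction n generalizing m with
  | zero =>
    obtain rfl : m = 0 := by omega
    exact ⟨by simpa [survivalProb] using ha 0, by simpa [survivalProb] using hb 0⟩
  | succ n ih =>
    have hb' : ∀ m ≤ n + 1, b m (n + 1) ≤ D * survivalProb (n + 1 - m) (n + 1 + m) := by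
      intro m hm
      rcases hm.lt_or_eq with hm | rfl
      · obtain ⟨ha_m, hb_m⟩ := ih (m := m) (by omega)
        rw [show n + 1 - m = n - m + 1 by omega, show n + 1 + m = n + m + 1 by omega, survivalProb]
        linarith [hb_succ m n (by omega)]
      · simpa [survivalProb] using hb (n + 1)
    refine ⟨?_, hb' m hmn⟩
    induction m with
    | zero => simpa [survivalProb_eq_one_of_lt] using ha (n + 1)
    | succ m ihm =>
      have ha_m := ihm (by omega)
      rw [show n + 1 - (m + 1) + 2 = n + 1 - m + 1 by omega,
        show n + 1 + (m + 1) = n + 1 + m + 1 by omega, survivalProb]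
      linarith [ha_succ m (n + 1) (by omega), hb' m (by omega)]

theorem dist_apply_self_le_of_midpoint_iteration {α : Type*} [PseudoMetricSpace α] {S : Set α}
    {T : α → α} (hT : LipschitzOnWith 1 T S) {x : ℕ → α} (hx : ∀ n, x n ∈ S) {y : α} (hy : y ∈ S)
    (hTy : dist (T y) y = 0)
    (hstep : ∀ n z, dist (x (n + 1)) z ≤ (dist (T (x n)) z + dist (x n) z) / 2)
    {n : ℕ} (hn : n ≠ 0) : dist (T (x n)) (x n) ≤ 4 / √(π * n) * dist (x 0) y := by
  have hT' {a b : α} (ha : a ∈ S) (hb : b ∈ S) : dist (T a) (T b) ≤ dist a b := by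
    simpa using hT.dist_le_mul a ha b hb
  set R := dist (x 0) y
  have horbit (k : ℕ) : dist (x k) y ≤ R := by
    induction k with
    | zero => exact le_rfl
    | succ k ih =>
      linarith [hstep k y, dist_triangle (T (x k)) (T y) y, hT' (hx k) hy]
  have hdiam (m k : ℕ) : dist (x m) (T (x k)) ≤ 2 * R := by
    linarith [dist_triangle4 (x m) y (T y) (T (x k)), horbit m, horbit k, dist_comm y (T y),
      dist_comm (T y) (T (x k)), hT' (hx k) hy]
  obtain ⟨hbound, -⟩ := le_mul_survivalProb_of_averaging (a := fun m k => dist (x m) (T (x k)))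
    (b := fun m k => dist (x m) (x k)) (hdiam 0) (fun m => (dist_self _).le)
    (fun m k _ => by
      simpa only [dist_comm (x m)] using hstep k (x m))
    (fun m k _ => by linarith [hstep m (T (x k)), hT' (hx m) (hx k)]) le_rfl (n := n)
  rw [Nat.sub_self, ← two_mul] at hbound
  calc dist (T (x n)) (x n) = dist (x n) (T (x n)) := dist_comm _ _
    _ ≤ 2 * R * survivalProb 2 (2 * n) := hbound
    _ ≤ 2 * R * (2 / √(π * n)) := by
      gcongr
      exact survivalProb_two_le hn
    _ = 4 / √(π * n) * R := by ring

section Hilbert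

variable {ι : Type*} [Fintype ι]

theorem sub_le_hopfOsc (z : ι → ℝ) (i j : ι) : z i - z j ≤ hopfOsc z := by
  have := le_ciSup (Finite.bddAbove_range z) i
  have := ciInf_le (Finite.bddBelow_range z) j
  unfold hopfOsc
  linarith

theorem hopfOsc_le_iff [Nonempty ι] {z : ι → ℝ} {C : ℝ} :
    hopfOsc z ≤ C ↔ ∀ i j, z i - z j ≤ C := by
  refine ⟨fun h i j => (sub_le_hopfOsc z i j).trans h, fun h => ?_⟩
  obtain ⟨i, hi⟩ := Finite.exists_max z
  obtain ⟨j, hj⟩ := Finite.exists_min z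
  have := ciSup_le hi
  have := le_ciInf hj
  unfold hopfOsc
  linarith [h i j]

theorem sub_le_dHilbert (x y : ι → ℝ) (i j : ι) :
    log (x i) - log (y i) - (log (x j) - log (y j)) ≤ dHilbert x y :=
  sub_le_hopfOsc (fun i => log (x i) - log (y i)) i j

variable [Nonempty ι]

theorem dHilbert_le_iff {x y : ι → ℝ} {C : ℝ} :
    dHilbert x y ≤ C ↔ ∀ i j, log (x i) - log (y i) - (log (x j) - log (y j)) ≤ C :=
  hopfOsc_le_iff

theorem dHilbert_self (x : ι → ℝ) : dHilbert x x = 0 := by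
  simp [dHilbert, hopfOsc]

theorem dHilbert_comm (x y : ι → ℝ) : dHilbert x y = dHilbert y x := by
  refine le_antisymm (dHilbert_le_iff.mpr fun i j => ?_) (dHilbert_le_iff.mpr fun i j => ?_) <;>
    linarith [sub_le_dHilbert x y j i, sub_le_dHilbert y x j i]

theorem dHilbert_triangle (x y z : ι → ℝ) : dHilbert x z ≤ dHilbert x y + dHilbert y z :=
  dHilbert_le_iff.mpr fun i j => by linarith [sub_le_dHilbert x y i j, sub_le_dHilbert y z i j]

theorem dHilbert_smul_left {c : ℝ} (hc : 0 < c) {x : ι → ℝ} (hx : ∀ i, 0 < x i) (y : ι → ℝ) :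
    dHilbert (c • x) y = dHilbert x y := by
  have hlog (i : ι) : log ((c • x) i) = log c + log (x i) := log_mul hc.ne' (hx i).ne'
  refine le_antisymm (dHilbert_le_iff.mpr fun i j => ?_) (dHilbert_le_iff.mpr fun i j => ?_) <;>
    linarith [hlog i, hlog j, sub_le_dHilbert (c • x) y i j, sub_le_dHilbert x y i j]

/-- `ι → ℝ` with Hilbert's projective pseudometric. -/
def HilbertProjective (ι : Type*) := ι → ℝ

noncomputable instance : PseudoMetricSpace (HilbertProjective ι) where
  dist := dHilbert
  dist_self := dHilbert_self
  dist_comm := dHilbert_comm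
  dist_triangle := dHilbert_triangle

theorem dHilbert_le_of_log_eq_midpoint {w a b : ι → ℝ} {c : ℝ}
    (hw : ∀ i, log (w i) = (log (a i) + log (b i)) / 2 + c) (z : ι → ℝ) :
    dHilbert w z ≤ (dHilbert a z + dHilbert b z) / 2 :=
  dHilbert_le_iff.mpr fun i j => by
    linarith [hw i, hw j, sub_le_dHilbert a z i j, sub_le_dHilbert b z i j]

end Hilbert

theorem log_sub_log_le_iff {a b c : ℝ} (ha : 0 < a) (hb : 0 < b) :
    log a - log b ≤ c ↔ a ≤ exp c * b := by
  rw [← log_div ha.ne' hb.ne', log_le_iff_le_exp (div_pos ha hb), div_le_iff₀ hb]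

section MonotoneHomogeneous

variable {ι : Type*} {f : (ι → ℝ) → ι → ℝ}
  (hmono : ∀ x y : ι → ℝ, 0 ≤ x → x ≤ y → f x ≤ f y)
  (hhom : ∀ t : ℝ, 0 < t → ∀ x : ι → ℝ, 0 ≤ x → f (t • x) = t • f x)
include hmono hhom

theorem apply_le_smul_apply {x y : ι → ℝ} (hx : 0 ≤ x) (hy : 0 ≤ y) {t : ℝ} (ht : 0 < t)
    (h : x ≤ t • y) : f x ≤ t • f y :=
  hhom t ht y hy ▸ hmono x _ hx h

theorem apply_pos_of_eigenvector [Finite ι] {u : ι → ℝ} (hu : ∀ i, 0 < u i) {lam : ℝ}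
    (hlam : 0 < lam) (heig : f u = lam • u) {x : ι → ℝ} (hx : ∀ i, 0 < x i) (i : ι) : 0 < f x i := by
  have : Nonempty ι := ⟨i⟩
  obtain ⟨j, hj⟩ := Finite.exists_min fun k => x k / u k
  have ht : 0 < x j / u j := div_pos (hx j) (hu j)
  have hle : (x j / u j) • f u ≤ f x := by
    rw [← hhom _ ht u fun k => (hu k).le]
    exact hmono _ _ (smul_nonneg ht.le fun k => (hu k).le) fun k => (le_div_iff₀ (hu k)).mp (hj k)
  calc 0 < x j / u j * (lam * u i) := by have := hu i; positivity
    _ ≤ f x i := by simpa [heig] using hle i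

theorem log_sub_log_apply_le {x y : ι → ℝ} (hx : ∀ i, 0 < x i) (hy : ∀ i, 0 < y i)
    (hfx : ∀ i, 0 < f x i) (hfy : ∀ i, 0 < f y i) {c : ℝ}
    (h : ∀ i, log (x i) - log (y i) ≤ c) (i : ι) : log (f x i) - log (f y i) ≤ c := by
  rw [log_sub_log_le_iff (hfx i) (hfy i)]
  refine apply_le_smul_apply hmono hhom (fun i => (hx i).le) (fun i => (hy i).le) (exp_pos c)
    (fun j => ?_) i
  exact (log_sub_log_le_iff (hx j) (hy j)).mp (h j)

theorem dHilbert_apply_le [Fintype ι] [Nonempty ι]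
    (hfpos : ∀ x : ι → ℝ, (∀ i, 0 < x i) → ∀ i, 0 < f x i)
    {x y : ι → ℝ} (hx : ∀ i, 0 < x i) (hy : ∀ i, 0 < y i) :
    dHilbert (f x) (f y) ≤ dHilbert x y := by
  have hmax (i : ι) : log (x i) - log (y i) ≤ ⨆ k, (log (x k) - log (y k)) :=
    le_ciSup (Finite.bddAbove_range fun k => log (x k) - log (y k)) i
  have hmin (i : ι) : log (y i) - log (x i) ≤ -⨅ k, (log (x k) - log (y k)) := by
    linarith [ciInf_le (Finite.bddBelow_range fun k => log (x k) - log (y k)) i]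
  refine dHilbert_le_iff.mpr fun i j => ?_
  have := log_sub_log_apply_le hmono hhom hx hy (hfpos x hx) (hfpos y hy) hmax i
  have := log_sub_log_apply_le hmono hhom hy hx (hfpos y hy) (hfpos x hx) hmin j
  change _ ≤ (⨆ k, (log (x k) - log (y k))) - ⨅ k, (log (x k) - log (y k))
  linarith

end MonotoneHomogeneous

theorem log_sqrt_div_mul {a b g : ℝ} (ha : 0 < a) (hb : 0 < b) (hg : 0 < g) :
    log √(a / g * b) = (log a + log b) / 2 + -log g / 2 := by
  rw [log_sqrt (by positivity), log_mul (by positivity) hb.ne', log_div ha.ne' hg.ne']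
  ring

theorem geomMean_pos {ι : Type*} [Fintype ι] {x : ι → ℝ} (hx : ∀ i, 0 < x i) : 0 < geomMean x :=
  rpow_pos_of_pos (prod_pos fun i _ => hx i) _

theorem projective_krasnoselskii_mann_asymptotic_regularity_general
    {ι : Type*} [Fintype ι] [Nonempty ι]
    (f : (ι → ℝ) → (ι → ℝ))
    (hmono : ∀ x y : ι → ℝ, 0 ≤ x → x ≤ y → f x ≤ f y)
    (hhom : ∀ t : ℝ, 0 < t → ∀ x : ι → ℝ, 0 ≤ x → f (t • x) = t • f x)
    (u : ι → ℝ) (hu : ∀ i, 0 < u i) (lam : ℝ) (hlam : 0 < lam) (heig : f u = lam • u)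
    (v : ℕ → ι → ℝ) (hv0pos : ∀ i, 0 < v 0 i)
    (hrec : ∀ k i, v (k + 1) i = Real.sqrt ((f (v k) i / geomMean (f (v k))) * v k i)) :
    ∀ k : ℕ, 0 < k →
      dHilbert (f (v k)) (v k) ≤ 4 / Real.sqrt (Real.pi * k) * dHilbert (v 0) u := by
  have hfpos (x : ι → ℝ) (hx : ∀ i, 0 < x i) : ∀ i, 0 < f x i :=
    apply_pos_of_eigenvector hmono hhom hu hlam heig hx
  have hvpos (k : ℕ) : ∀ i, 0 < v k i := by
    induction k with
    | zero => exact hv0pos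
    | succ k ih =>
      intro i
      rw [hrec]
      exact sqrt_pos.2 (mul_pos (div_pos (hfpos _ ih i) (geomMean_pos (hfpos _ ih))) (ih i))
  have hlog (k : ℕ) (i : ι) : log (v (k + 1) i) =
      (log (f (v k) i) + log (v k i)) / 2 + -log (geomMean (f (v k))) / 2 := by
    rw [hrec]
    exact log_sqrt_div_mul (hfpos _ (hvpos k) i) (hvpos k i) (geomMean_pos (hfpos _ (hvpos k)))
  intro k hk
  exact dist_apply_self_le_of_midpoint_iteration (α := HilbertProjective ι)
    (S := {x | ∀ i, 0 < x i}) (T := f)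
    (LipschitzOnWith.mk_one fun x hx y hy => dHilbert_apply_le hmono hhom hfpos hx hy) hvpos hu
    (show dHilbert (f u) u = 0 by rw [heig, dHilbert_smul_left hlam hu, dHilbert_self])
    (fun n z => dHilbert_le_of_log_eq_midpoint (hlog n) z) hk.ne'

/-- quantitative asymptotic regularity of the projective
Krasnoselskii–Mann iteration: `d_H(f(v^k), v^k) ≤ (4/√(πk)) d_H(v⁰, u)`. -/
theorem projective_krasnoselskii_mann_asymptotic_regularity
    {ι : Type*} [Fintype ι] [Nonempty ι]
    (f : (ι → ℝ) → (ι → ℝ))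
    (hpos : ∀ x : ι → ℝ, 0 ≤ x → 0 ≤ f x)
    (hmono : ∀ x y : ι → ℝ, 0 ≤ x → x ≤ y → f x ≤ f y)
    (hhom : ∀ t : ℝ, 0 < t → ∀ x : ι → ℝ, 0 ≤ x → f (t • x) = t • f x)
    (u : ι → ℝ) (hu : ∀ i, 0 < u i) (lam : ℝ) (hlam : 0 < lam) (heig : f u = lam • u)
    (v : ℕ → ι → ℝ) (hv0pos : ∀ i, 0 < v 0 i) (hv0 : ∏ i, v 0 i = 1)
    (hrec : ∀ k i, v (k + 1) i = Real.sqrt ((f (v k) i / geomMean (f (v k))) * v k i)) :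
    ∀ k : ℕ, 0 < k →
      dHilbert (f (v k)) (v k) ≤ 4 / Real.sqrt (Real.pi * k) * dHilbert (v 0) u :=
  projective_krasnoselskii_mann_asymptotic_regularity_general f hmono hhom u hu lam hlam heig v
    hv0pos hrec
end
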